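/- arXiv:2307.11300 — 8 statements merged into one kernel-verified Lean document; each statement's English description precedes it below -/
import Mathlib

section
/- Let $p>1$ and let $\psi:[0,\infty)\to[1,\infty)$ be twice continuously differentiable with $\psi'(x)>0$, $\psi''(x)<0$, $x(\ln\psi(x))' \le \min\{1/4,\,1-1/\sqrt{p}\}$, $-x(\ln\psi'(x))' \le 3/2$, and $\psi(\sqrt{p}\,x\,\psi(x)) \le \sqrt{p}\,\psi(x)$ for all $x\ge 0$. Then for all $x,y\ge 0$: $\frac{2xy}{\psi(y)} \le \frac{p x^2}{\psi^2(x)} + y^2$. -/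
open Real

private lemma key_g_aux (p : ℝ) (hp : 1 < p) (β : ℝ) (hβ1 : 3/2 ≤ β)
    (hβ2 : 2 / Real.sqrt p ≤ β) :
    ∀ t : ℝ, 1 ≤ t → 2 * Real.sqrt p * t - 1 ≤ p * t ^ β := by
  have hp0 : (0:ℝ) < p := by linarith
  have hsp : 0 < Real.sqrt p := Real.sqrt_pos.mpr hp0
  have hsq : Real.sqrt p * Real.sqrt p = p := Real.mul_self_sqrt hp0.le
  set f : ℝ → ℝ := fun t => p * t ^ β - 2 * Real.sqrt p * t + 1 with hf
  have HD : ∀ s : ℝ, 0 < s → HasDerivAt f (p * (β * s ^ (β - 1)) - 2 * Real.sqrt p) s := by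
    intro s hs
    have h1 : HasDerivAt (fun t : ℝ => t ^ β) (β * s ^ (β - 1)) s :=
      Real.hasDerivAt_rpow_const (Or.inl hs.ne')
    have h2 : HasDerivAt (fun t : ℝ => 2 * Real.sqrt p * t) (2 * Real.sqrt p) s := by
      simpa using (hasDerivAt_id s).const_mul (2 * Real.sqrt p)
    exact ((h1.const_mul p).sub h2).add_const 1
  have hmono : MonotoneOn f (Set.Ici (1:ℝ)) := by
    apply monotoneOn_of_deriv_nonneg (convex_Ici 1)
    · intro s hs
      exact (HD s (by simp at hs; linarith)).continuousAt.continuousWithinAt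
    · intro s hs
      rw [interior_Ici] at hs
      exact (HD s (by simp at hs; linarith)).differentiableAt.differentiableWithinAt
    · intro s hs
      rw [interior_Ici] at hs
      have hs1 : (1:ℝ) < s := hs
      have hs0 : (0:ℝ) < s := by linarith
      rw [(HD s hs0).deriv]
      have h1 : (1:ℝ) ≤ s ^ (β - 1) := Real.one_le_rpow hs1.le (by linarith)
      have h2 : 2 * Real.sqrt p ≤ p * β := by
        have h3 : p * (2 / Real.sqrt p) ≤ p * β := by nlinarith
        calc 2 * Real.sqrt p = p * (2 / Real.sqrt p) := by
              field_simp; nlinarith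
          _ ≤ p * β := h3
      nlinarith
  intro t ht
  have h1 := hmono (Set.self_mem_Ici) (Set.mem_Ici.mpr ht) ht
  have hf1 : 0 ≤ f 1 := by
    have h : f 1 = p - 2 * Real.sqrt p + 1 := by simp [hf]
    rw [h]; nlinarith [sq_nonneg (Real.sqrt p - 1)]
  simp only [hf, Real.one_rpow] at h1 hf1 ⊢
  linarith

private lemma gronwall_aux (ψ : ℝ → ℝ) (hd : Differentiable ℝ ψ)
    (hpos : ∀ s : ℝ, 0 < s → 0 < ψ s) (α : ℝ)
    (hα : ∀ s : ℝ, 0 < s → deriv ψ s / ψ s ≤ α / s)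
    (a b : ℝ) (ha : 0 < a) (hab : a ≤ b) :
    Real.log (ψ b) ≤ Real.log (ψ a) + α * (Real.log b - Real.log a) := by
  set L : ℝ → ℝ := fun s => α * Real.log s - Real.log (ψ s) with hL
  have HD : ∀ s : ℝ, 0 < s → HasDerivAt L (α / s - deriv ψ s / ψ s) s := by
    intro s hs
    have h1 : HasDerivAt (fun u : ℝ => Real.log u) s⁻¹ s := Real.hasDerivAt_log hs.ne'
    have h2 : HasDerivAt (fun u : ℝ => Real.log (ψ u)) ((ψ s)⁻¹ * deriv ψ s) s :=
      (Real.hasDerivAt_log (hpos s hs).ne').comp s (hd s).hasDerivAt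
    have := (h1.const_mul α).sub h2
    exact this.congr_deriv (by ring)
  have hmono : MonotoneOn L (Set.Ici a) := by
    apply monotoneOn_of_deriv_nonneg (convex_Ici a)
    · intro s hs
      exact (HD s (lt_of_lt_of_le ha hs)).continuousAt.continuousWithinAt
    · intro s hs
      rw [interior_Ici] at hs
      exact (HD s (lt_trans ha hs)).differentiableAt.differentiableWithinAt
    · intro s hs
      rw [interior_Ici] at hs
      have hs0 : 0 < s := lt_trans ha hs
      rw [(HD s hs0).deriv]
      linarith [hα s hs0]
  have := hmono (Set.self_mem_Ici) (Set.mem_Ici.mpr hab) hab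
  simp only [hL] at this
  linarith

/-- Proposition 3.1: crucial inequality for a twice continuously differentiable
function `ψ : [0,∞) → [1,∞)` with `ψ' > 0`, `ψ'' < 0`,
`x (ln ψ)'(x) = x ψ'(x)/ψ(x) ≤ min{1/4, 1 - 1/√p}`,
`-x (ln ψ')'(x) = -x ψ''(x)/ψ'(x) ≤ 3/2` and `ψ(√p x ψ(x)) ≤ √p ψ(x)` on `[0,∞)`. -/
theorem stmt_0 (p : ℝ) (hp : 1 < p) (ψ : ℝ → ℝ)
    (hC2 : ContDiff ℝ 2 ψ)
    (hψ1 : ∀ x : ℝ, 0 ≤ x → 1 ≤ ψ x)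
    (hψ' : ∀ x : ℝ, 0 ≤ x → 0 < deriv ψ x)
    (hψ'' : ∀ x : ℝ, 0 ≤ x → deriv (deriv ψ) x < 0)
    (hlog : ∀ x : ℝ, 0 ≤ x →
      x * deriv ψ x / ψ x ≤ min (1 / 4) (1 - 1 / Real.sqrt p))
    (hlog' : ∀ x : ℝ, 0 ≤ x → -(x * deriv (deriv ψ) x / deriv ψ x) ≤ 3 / 2)
    (hfix : ∀ x : ℝ, 0 ≤ x → ψ (Real.sqrt p * x * ψ x) ≤ Real.sqrt p * ψ x) :
    ∀ x y : ℝ, 0 ≤ x → 0 ≤ y →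
      2 * x * y / ψ y ≤ p * x ^ 2 / (ψ x) ^ 2 + y ^ 2 := by
  intro x y hx hy
  have hp0 : (0:ℝ) < p := by linarith
  have hsp : 0 < Real.sqrt p := Real.sqrt_pos.mpr hp0
  have hsq : Real.sqrt p * Real.sqrt p = p := Real.mul_self_sqrt hp0.le
  have hψx : (0:ℝ) < ψ x := lt_of_lt_of_le one_pos (hψ1 x hx)
  have hψy : (0:ℝ) < ψ y := lt_of_lt_of_le one_pos (hψ1 y hy)
  by_cases hA : ψ x ≤ Real.sqrt p * ψ y
  · -- easy case
    rw [div_le_iff₀ hψy]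
    set u : ℝ := Real.sqrt p * x / ψ x with hu
    have hu0 : 0 ≤ u := by positivity
    have e : p * x ^ 2 / (ψ x) ^ 2 = u ^ 2 := by
      rw [hu, div_pow, mul_pow]
      congr 1
      nlinarith
    have h3 : x ≤ u * ψ y := by
      rw [hu, div_mul_eq_mul_div, le_div_iff₀ hψx]
      nlinarith
    rw [e]
    nlinarith [mul_nonneg (mul_nonneg (by linarith : (0:ℝ) ≤ u * ψ y - x) hy)
        (by norm_num : (0:ℝ) ≤ 2), mul_nonneg (sq_nonneg (u - y)) hψy.le]
  · push_neg at hA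
    rcases eq_or_lt_of_le hy with hy0 | hy'
    · rw [← hy0]
      have h1 : 0 ≤ p * x ^ 2 / (ψ x) ^ 2 := by positivity
      simp
      linarith
    have hsp1 : 1 < Real.sqrt p := by
      nlinarith
    set α : ℝ := min (1/4) (1 - 1/Real.sqrt p) with hαdef
    have hα4 : α ≤ 1/4 := min_le_left _ _
    have hαs : α ≤ 1 - 1/Real.sqrt p := min_le_right _ _
    set β : ℝ := 2 - 2*α with hβdef
    have hβ1 : 3/2 ≤ β := by rw [hβdef]; linarith
    have hβ2 : 2 / Real.sqrt p ≤ β := by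
      have e2 : 2 / Real.sqrt p = 2 * (1 / Real.sqrt p) := by ring
      rw [e2, hβdef]; linarith
    set x₀ : ℝ := Real.sqrt p * y * ψ y with hx₀
    have hx₀pos : 0 < x₀ := by rw [hx₀]; positivity
    have hψx₀ : ψ x₀ ≤ Real.sqrt p * ψ y := hfix y hy
    have hdiff : Differentiable ℝ ψ := hC2.differentiable (by norm_num)
    have hmonoψ : StrictMonoOn ψ (Set.Ici 0) := by
      apply strictMonoOn_of_deriv_pos (convex_Ici 0) hC2.continuous.continuousOn
      intro s hs
      rw [interior_Ici] at hs
      exact hψ' s hs.le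
    have hx₀x : x₀ < x := by
      by_contra h
      push_neg at h
      have := hmonoψ.monotoneOn (Set.mem_Ici.mpr hx) (Set.mem_Ici.mpr hx₀pos.le) h
      linarith
    have hxpos : 0 < x := lt_trans hx₀pos hx₀x
    have hpos' : ∀ s : ℝ, 0 < s → 0 < ψ s :=
      fun s hs => lt_of_lt_of_le one_pos (hψ1 s hs.le)
    have hα' : ∀ s : ℝ, 0 < s → deriv ψ s / ψ s ≤ α / s := by
      intro s hs
      have h := hlog s hs.le
      have hψs : 0 < ψ s := hpos' s hs
      rw [div_le_div_iff₀ hψs hs]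
      have h2 := (div_le_iff₀ hψs).mp h
      nlinarith
    have hg := gronwall_aux ψ hdiff hpos' α hα' x₀ x hx₀pos hx₀x.le
    set t : ℝ := x / x₀ with htdef
    have ht1 : 1 < t := (one_lt_div hx₀pos).mpr hx₀x
    have ht0 : 0 < t := by linarith
    have hψxle : ψ x ≤ ψ x₀ * t ^ α := by
      have h1 : Real.log (ψ x₀ * t ^ α)
          = Real.log (ψ x₀) + α * (Real.log x - Real.log x₀) := by
        rw [Real.log_mul (ne_of_gt (hpos' x₀ hx₀pos))
            (ne_of_gt (Real.rpow_pos_of_pos ht0 α)),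
          Real.log_rpow ht0, htdef, Real.log_div (ne_of_gt hxpos) (ne_of_gt hx₀pos)]
      have h2 : Real.log (ψ x) ≤ Real.log (ψ x₀ * t ^ α) := by rw [h1]; exact hg
      have hM : 0 < ψ x₀ * t ^ α := by
        have := hpos' x₀ hx₀pos
        positivity
      exact (Real.log_le_log_iff (hpos' x hxpos) hM).mp h2
    have htα : 0 < t ^ α := Real.rpow_pos_of_pos ht0 α
    have hψxle2 : ψ x ≤ Real.sqrt p * ψ y * t ^ α := by
      refine hψxle.trans ?_
      nlinarith
    have hkey := key_g_aux p hp β hβ1 hβ2 t ht1.le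
    have hxeq : x = t * x₀ := by rw [htdef]; field_simp
    have hLHS : 2 * x * y / ψ y = 2 * Real.sqrt p * t * y^2 := by
      rw [hxeq, hx₀]
      field_simp
    have eAB : t ^ α * t ^ α * t ^ β = t ^ 2 := by
      rw [← Real.rpow_add ht0, ← Real.rpow_add ht0, ← Real.rpow_natCast t 2]
      congr 1
      rw [hβdef]
      push_cast
      ring
    have hM0 : 0 < Real.sqrt p * ψ y * t ^ α := by positivity
    have hRHS2 : p * y^2 * t ^ β ≤ p * x^2 / (Real.sqrt p * ψ y * t ^ α)^2 := by
      rw [le_div_iff₀ (by positivity)]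
      rw [hxeq, hx₀]
      linear_combination (Real.sqrt p ^ 2 * p * y ^ 2 * ψ y ^ 2) * eAB
    have hRHS1 : p * x^2 / (Real.sqrt p * ψ y * t ^ α)^2 ≤ p * x^2 / (ψ x)^2 := by
      apply div_le_div_of_nonneg_left (by positivity) (by positivity)
      exact pow_le_pow_left₀ hψx.le hψxle2 2
    rw [hLHS]
    have hc : p * y^2 * t ^ β ≤ p * x^2 / (ψ x)^2 := hRHS2.trans hRHS1
    have hk2 : (2 * Real.sqrt p * t - 1) * y^2 ≤ p * t ^ β * y^2 :=
      mul_le_mul_of_nonneg_right hkey (sq_nonneg y)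
    linarith
end

section
/- For every integer $n\ge 1$, every real $\lambda>1/2$, and every real $p>1$, there exists a constant $k\ge e^{(n)}$ (depending only on $n,\lambda,p$) such that for all $x,y\ge 0$: $\frac{2xy}{\mathcal{IL}_{n,k}^\lambda(y)} \le \frac{p x^2}{(\mathcal{IL}_{n,k}^\lambda(x))^2} + y^2$. -/
open Real Finset

/-- `iterLog n x` is the `n`-fold iterated logarithm `ln^{(n)}(x)` (with `iterLog 0 x = x`). -/
noncomputable def iterLog : ℕ → ℝ → ℝ
  | 0, x => x
  | n + 1, x => Real.log (iterLog n x)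

/-- `iterExp n` is the exponential tower `e^{(n)}`, with `e^{(1)} = e`. -/
noncomputable def iterExp : ℕ → ℝ
  | 0 => 1
  | n + 1 => Real.exp (iterExp n)

/-- `IL n k lam x = ∏_{i=1}^{n-1} √(ln^{(i)}(k+x)) · (ln^{(n)}(k+x))^lam`. -/
noncomputable def IL (n : ℕ) (k lam x : ℝ) : ℝ :=
  (∏ i ∈ Finset.range (n - 1), Real.sqrt (iterLog (i + 1) (k + x))) *
    (iterLog n (k + x)) ^ lam

private lemma le_exp_self' (x : ℝ) : x ≤ Real.exp x := by
  linarith [Real.add_one_le_exp x]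

private lemma le_expIter (m : ℕ) (c : ℝ) : c ≤ Real.exp^[m] c := by
  induction m with
  | zero => simp
  | succ m ih =>
    rw [Function.iterate_succ_apply']
    exact ih.trans (le_exp_self' _)

private lemma expIter_mono (m : ℕ) {c d : ℝ} (h : c ≤ d) :
    Real.exp^[m] c ≤ Real.exp^[m] d := by
  induction m with
  | zero => simpa
  | succ m ih =>
    rw [Function.iterate_succ_apply', Function.iterate_succ_apply']
    exact Real.exp_le_exp.2 ih

private lemma iterExp_eq (n : ℕ) : iterExp n = Real.exp^[n] 1 := by
  induction n with
  | zero => rfl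
  | succ n ih => rw [Function.iterate_succ_apply', iterExp, ih]

/-- Lower bound and monotonicity of iterated logs above a tower base. -/
private lemma iterLog_bounds {M : ℝ} (hM : 1 ≤ M) (n : ℕ) :
    ∀ i ≤ n, ∀ b a : ℝ, Real.exp^[n] M ≤ b → b ≤ a →
      Real.exp^[n - i] M ≤ iterLog i b ∧ iterLog i b ≤ iterLog i a := by
  intro i
  induction i with
  | zero => intro _ b a hb hba; exact ⟨by simpa [iterLog] using hb, hba⟩
  | succ i ih =>
    intro hin b a hb hba
    obtain ⟨h1, h2⟩ := ih (Nat.le_of_succ_le hin) b a hb hba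
    have hpos : (0:ℝ) < Real.exp^[n - (i+1)] M :=
      lt_of_lt_of_le (by linarith) (le_expIter _ M)
    have hni : n - i = (n - (i+1)) + 1 := by omega
    rw [hni, Function.iterate_succ_apply'] at h1
    have hb0 : (0:ℝ) < iterLog i b := lt_of_lt_of_le (Real.exp_pos _) h1
    constructor
    · show Real.exp^[n - (i+1)] M ≤ Real.log (iterLog i b)
      calc Real.exp^[n - (i+1)] M = Real.log (Real.exp (Real.exp^[n - (i+1)] M)) :=
            (Real.log_exp _).symm
        _ ≤ Real.log (iterLog i b) := Real.log_le_log (Real.exp_pos _) h1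
    · exact Real.log_le_log hb0 h2

private lemma log_ratio_step {u v : ℝ} (hv : Real.exp 1 ≤ v) (huv : v ≤ u) :
    v * Real.log u ≤ u * Real.log v := by
  have hv0 : 0 < v := lt_of_lt_of_le (Real.exp_pos 1) hv
  have hu0 : 0 < u := lt_of_lt_of_le hv0 huv
  have h := Real.log_div_self_antitoneOn (show v ∈ {x : ℝ | Real.exp 1 ≤ x} from hv)
    (show u ∈ {x : ℝ | Real.exp 1 ≤ x} from hv.trans huv) huv
  rw [div_le_div_iff₀ hu0 hv0] at h
  linarith

/-- `l_i(a)/l_i(b) ≤ log a / log b` in multiplicative form. -/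
private lemma iterLog_ratio {M : ℝ} (hM : 4 ≤ M) (n : ℕ) {b a : ℝ}
    (hb : Real.exp^[n] M ≤ b) (hba : b ≤ a) :
    ∀ i, 1 ≤ i → i ≤ n → iterLog i a * Real.log b ≤ iterLog i b * Real.log a := by
  have hM1 : (1:ℝ) ≤ M := by linarith
  intro i
  induction i with
  | zero => omega
  | succ i ih =>
    intro _ hin
    rcases Nat.eq_zero_or_pos i with h0 | h1
    · subst h0
      show Real.log (iterLog 0 a) * Real.log b ≤ Real.log (iterLog 0 b) * Real.log a
      simp only [iterLog]
      have hb0 : Real.exp^[n] M ≤ a := hb.trans hba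
      exact le_of_eq (mul_comm _ _)
    · have key := ih h1 (by omega)
      have hib := (iterLog_bounds hM1 n i (by omega) b a hb hba).1
      have hia := (iterLog_bounds hM1 n i (by omega) a a (hb.trans hba) le_rfl).1
      have hmono := (iterLog_bounds hM1 n i (by omega) b a hb hba).2
      have hMe : Real.exp 1 ≤ M := by
        have := Real.exp_one_lt_d9
        linarith
      have hMi : M ≤ Real.exp^[n - i] M := le_expIter _ _
      have hvb : Real.exp 1 ≤ iterLog i b := hMe.trans (hMi.trans hib)
      have A := log_ratio_step hvb hmono
      -- A : iterLog i b * log (iterLog i a) ≤ iterLog i a * log (iterLog i b)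
      have hib0 : (0:ℝ) < iterLog i b := lt_of_lt_of_le (Real.exp_pos 1) hvb
      have hlb0 : (0:ℝ) < Real.log b := by
        have h1b : (1:ℝ) < b := by
          have : M ≤ b := (le_expIter _ _).trans hb
          linarith
        exact Real.log_pos h1b
      have hlb1 : (0:ℝ) ≤ Real.log (iterLog i b) := by
        have : (1:ℝ) ≤ iterLog i b := by
          have := hMi.trans hib; linarith
        exact Real.log_nonneg this
      show Real.log (iterLog i a) * Real.log b ≤ Real.log (iterLog i b) * Real.log a
      have h3 : iterLog i b * (Real.log (iterLog i a) * Real.log b) ≤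
          iterLog i b * (Real.log (iterLog i b) * Real.log a) := by
        have e1 := mul_le_mul_of_nonneg_right A (le_of_lt hlb0)
        have e2 := mul_le_mul_of_nonneg_right key hlb1
        linarith only [e1, e2]
      exact le_of_mul_le_mul_left h3 hib0

private lemma amgm {a b t : ℝ} (ht : 0 < t) : 2 * a * b ≤ t * a ^ 2 + b ^ 2 / t := by
  have h2 : 2 * a * b * t ≤ (t * a ^ 2 + b ^ 2 / t) * t := by
    have h := sq_nonneg (t * a - b)
    have e : (t * a ^ 2 + b ^ 2 / t) * t = t ^ 2 * a ^ 2 + b ^ 2 := by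
      field_simp
    rw [e]; linarith only [h]
  exact le_of_mul_le_mul_right h2 ht

set_option maxHeartbeats 1000000 in
/-- Proposition 3.2: for every `n ≥ 1`, `λ > 1/2`, `p > 1` there is `k ≥ e^{(n)}`
such that `2xy / IL_{n,k}^λ(y) ≤ p x² / (IL_{n,k}^λ(x))² + y²` for all `x, y ≥ 0`. -/
theorem stmt_1 (n : ℕ) (hn : 1 ≤ n) (lam p : ℝ) (hlam : 1 / 2 < lam) (hp : 1 < p) :
    ∃ k : ℝ, iterExp n ≤ k ∧ ∀ x y : ℝ, 0 ≤ x → 0 ≤ y →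
      2 * x * y / IL n k lam y ≤ p * x ^ 2 / (IL n k lam x) ^ 2 + y ^ 2 := by
  have hp0 : (0:ℝ) < p := by linarith
  set μ : ℝ := ((n - 1 : ℕ) : ℝ) / 2 + lam with hμ
  have hμpos : 0 < μ := by
    have : (0:ℝ) ≤ ((n - 1 : ℕ) : ℝ) := Nat.cast_nonneg _
    have : (0:ℝ) < lam := by linarith
    positivity
  set ρ : ℝ := p ^ (1 / (2 * μ)) with hρdef
  have hρ : 1 < ρ := by
    rw [hρdef]
    exact (Real.one_lt_rpow_iff_of_pos hp0).2 (Or.inl ⟨hp, by positivity⟩)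
  have hρ0 : (0:ℝ) < ρ := by linarith
  -- smallness of log
  have hsmall : ∀ᶠ L in Filter.atTop, 2 * μ * Real.log L ≤ (1 - 1/ρ) * L := by
    have hc : (0:ℝ) < (1 - 1/ρ) / (2 * μ) := by
      have h1 : 1/ρ < 1 := by
        rw [div_lt_one hρ0]; exact hρ
      apply div_pos (by linarith) (by positivity)
    have h := Real.isLittleO_log_id_atTop.bound hc
    filter_upwards [h, Filter.eventually_ge_atTop (1:ℝ)] with L h1 h2
    rw [Real.norm_eq_abs, Real.norm_eq_abs] at h1
    rw [abs_of_nonneg (Real.log_nonneg h2), id, abs_of_nonneg (by linarith : (0:ℝ) ≤ L)] at h1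
    have hμne : μ ≠ 0 := ne_of_gt hμpos
    calc 2 * μ * Real.log L ≤ 2 * μ * ((1 - 1/ρ) / (2 * μ) * L) := by
          apply mul_le_mul_of_nonneg_left h1 (by positivity)
      _ = (1 - 1/ρ) * L := by field_simp
  obtain ⟨M₀, hM₀⟩ := Filter.eventually_atTop.mp hsmall
  set M : ℝ := max M₀ 4 with hMdef
  have hM4 : (4:ℝ) ≤ M := le_max_right _ _
  have hM1 : (1:ℝ) ≤ M := by linarith
  have hMM₀ : M₀ ≤ M := le_max_left _ _
  set k : ℝ := Real.exp^[n] M with hkdef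
  have hkM : M ≤ k := le_expIter _ _
  have hk0 : (0:ℝ) < k := by linarith
  refine ⟨k, ?_, ?_⟩
  · rw [iterExp_eq]; exact expIter_mono n hM1
  intro x y hx hy
  -- basic facts about iterLog at k + z for 0 ≤ z
  have hbase : ∀ z : ℝ, 0 ≤ z → Real.exp^[n] M ≤ k + z := fun z hz => by
    simp only [hkdef]; linarith
  have hlow : ∀ z : ℝ, 0 ≤ z → ∀ i ≤ n, M ≤ iterLog i (k + z) := by
    intro z hz i hin
    have := (iterLog_bounds hM1 n i hin (k+z) (k+z) (hbase z hz) le_rfl).1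
    exact (le_expIter _ _).trans this
  have hmono : ∀ z w : ℝ, 0 ≤ z → z ≤ w → ∀ i ≤ n, iterLog i (k + z) ≤ iterLog i (k + w) := by
    intro z w hz hzw i hin
    exact (iterLog_bounds hM1 n i hin (k+z) (k+w) (hbase z hz) (by linarith)).2
  -- iterLog i (k+z) ≤ log (k+z) for 1 ≤ i ≤ n
  have hdec : ∀ z : ℝ, 0 ≤ z → ∀ i, 1 ≤ i → i ≤ n → iterLog i (k + z) ≤ Real.log (k + z) := by
    intro z hz i
    induction i with
    | zero => omega
    | succ i ih =>
      intro _ hin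
      rcases Nat.eq_zero_or_pos i with h0 | h1
      · subst h0; exact le_rfl
      · have h2 := ih h1 (by omega)
        have h3 : (0:ℝ) ≤ iterLog i (k + z) := by
          have := hlow z hz i (by omega); linarith
        calc iterLog (i+1) (k+z) = Real.log (iterLog i (k+z)) := rfl
          _ ≤ iterLog i (k+z) := Real.log_le_self h3
          _ ≤ Real.log (k + z) := h2
  -- IL is at least 2 and monotone
  have hILlow : ∀ z : ℝ, 0 ≤ z → 2 ≤ IL n k lam z := by
    intro z hz
    have hprod : (1:ℝ) ≤ ∏ i ∈ Finset.range (n-1), Real.sqrt (iterLog (i+1) (k+z)) := by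
      have := Finset.prod_le_prod (s := Finset.range (n-1)) (f := fun _ => (1:ℝ))
        (g := fun i => Real.sqrt (iterLog (i+1) (k+z)))
        (fun i _ => by norm_num)
        (fun i hi => by
          rw [Finset.mem_range] at hi
          have h4 : (4:ℝ) ≤ iterLog (i+1) (k+z) :=
            hM4.trans (hlow z hz (i+1) (by omega))
          rw [show (1:ℝ) = Real.sqrt 1 by simp]
          exact Real.sqrt_le_sqrt (by linarith))
      simpa using this
    have hq : (2:ℝ) ≤ (iterLog n (k+z)) ^ lam := by
      have h4 : (4:ℝ) ≤ iterLog n (k+z) := hM4.trans (hlow z hz n le_rfl)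
      have s1 : ((4:ℝ)) ^ ((1:ℝ)/2) ≤ (4:ℝ) ^ lam :=
        Real.rpow_le_rpow_of_exponent_le (by norm_num) (le_of_lt hlam)
      have s2 : ((4:ℝ)) ^ lam ≤ (iterLog n (k+z)) ^ lam :=
        Real.rpow_le_rpow (by norm_num) h4 (by linarith)
      have s3 : ((4:ℝ)) ^ ((1:ℝ)/2) = 2 := by
        rw [show (4:ℝ) = 2^(2:ℕ) by norm_num, ← Real.rpow_natCast 2 2,
          ← Real.rpow_mul (by norm_num)]
        norm_num
      linarith
    have hq0 : (0:ℝ) ≤ (iterLog n (k+z)) ^ lam := by linarith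
    calc (2:ℝ) ≤ (iterLog n (k+z)) ^ lam := hq
      _ = 1 * (iterLog n (k+z)) ^ lam := (one_mul _).symm
      _ ≤ IL n k lam z := mul_le_mul_of_nonneg_right hprod hq0
  have hIL0 : ∀ z : ℝ, 0 ≤ z → (0:ℝ) < IL n k lam z := fun z hz => by
    linarith [hILlow z hz]
  have hILmono : ∀ z w : ℝ, 0 ≤ z → z ≤ w → IL n k lam z ≤ IL n k lam w := by
    intro z w hz hzw
    have hw : 0 ≤ w := le_trans hz hzw
    unfold IL
    apply mul_le_mul
    · apply Finset.prod_le_prod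
      · intro i _; exact Real.sqrt_nonneg _
      · intro i hi
        rw [Finset.mem_range] at hi
        exact Real.sqrt_le_sqrt (hmono z w hz hzw (i+1) (by omega))
    · apply Real.rpow_le_rpow
      · have := hlow z hz n le_rfl; linarith
      · exact hmono z w hz hzw n le_rfl
      · linarith
    · apply Real.rpow_nonneg
      have := hlow z hz n le_rfl; linarith
    · apply Finset.prod_nonneg; intro i _; exact Real.sqrt_nonneg _
  -- IL z ≤ (log (k+z)) ^ μ
  have hL4 : ∀ z : ℝ, 0 ≤ z → (4:ℝ) ≤ Real.log (k + z) := by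
    intro z hz
    have := hlow z hz 1 hn
    simpa [iterLog] using le_trans hM4 this
  have hILup : ∀ z : ℝ, 0 ≤ z → IL n k lam z ≤ (Real.log (k+z)) ^ μ := by
    intro z hz
    set L := Real.log (k + z) with hL
    have hL0 : (0:ℝ) < L := by have := hL4 z hz; linarith
    have hprod : (∏ i ∈ Finset.range (n-1), Real.sqrt (iterLog (i+1) (k+z)))
        ≤ L ^ (((n-1:ℕ):ℝ)/2) := by
      calc (∏ i ∈ Finset.range (n-1), Real.sqrt (iterLog (i+1) (k+z)))
          ≤ ∏ _i ∈ Finset.range (n-1), Real.sqrt L := by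
            apply Finset.prod_le_prod
            · intro i _; exact Real.sqrt_nonneg _
            · intro i hi
              rw [Finset.mem_range] at hi
              exact Real.sqrt_le_sqrt (hdec z hz (i+1) (by omega) (by omega))
        _ = (Real.sqrt L) ^ (n-1:ℕ) := by rw [Finset.prod_const, Finset.card_range]
        _ = L ^ (((n-1:ℕ):ℝ)/2) := by
            rw [Real.sqrt_eq_rpow, ← Real.rpow_natCast (L ^ ((1:ℝ)/2)) (n-1),
              ← Real.rpow_mul (le_of_lt hL0)]
            congr 1; ring
    have hq : (iterLog n (k+z)) ^ lam ≤ L ^ lam := by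
      apply Real.rpow_le_rpow
      · have := hlow z hz n le_rfl; linarith
      · exact hdec z hz n hn le_rfl
      · linarith
    calc IL n k lam z ≤ L ^ (((n-1:ℕ):ℝ)/2) * L ^ lam := by
          apply mul_le_mul hprod hq
          · apply Real.rpow_nonneg
            have := hlow z hz n le_rfl; linarith
          · positivity
      _ = L ^ μ := by rw [← Real.rpow_add hL0]
  -- main case analysis
  set A := IL n k lam x with hA
  set B := IL n k lam y with hB
  have hA2 : (2:ℝ) ≤ A := hILlow x hx
  have hB2 : (2:ℝ) ≤ B := hILlow y hy
  have hA0 : (0:ℝ) < A := by linarith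
  have hB0 : (0:ℝ) < B := by linarith
  rcases le_total x y with hxy | hyx
  · -- x ≤ y : use monotonicity
    have hAB : A ≤ B := hILmono x y hx hxy
    have step1 : 2*x*y / B ≤ 2*x*y / A := by
      apply div_le_div_of_nonneg_left (by positivity) hA0 hAB
    have step2 : 2*(x/A)*y ≤ p*(x/A)^2 + y^2/p := amgm hp0
    have step3 : y^2/p ≤ y^2 := by
      rw [div_le_iff₀ hp0]
      exact le_mul_of_one_le_right (sq_nonneg y) (le_of_lt hp)
    have e1 : 2*x*y/A = 2*(x/A)*y := by ring
    have e2 : p*(x/A)^2 = p*x^2/A^2 := by rw [div_pow]; ring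
    calc 2*x*y / B ≤ 2*x*y / A := step1
      _ = 2*(x/A)*y := e1
      _ ≤ p*(x/A)^2 + y^2/p := step2
      _ = p*x^2/A^2 + y^2/p := by rw [e2]
      _ ≤ p*x^2/A^2 + y^2 := by linarith
  · rcases le_or_gt y (x / A^2) with hcase | hcase
    · -- small y
      have step1 : 2*x*y / B ≤ 2*x*y / 2 := by
        apply div_le_div_of_nonneg_left (by positivity) (by norm_num) hB2
      have step2 : x*y ≤ x^2/A^2 := by
        calc x*y ≤ x * (x/A^2) := mul_le_mul_of_nonneg_left hcase hx
          _ = x^2/A^2 := by ring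
      have step3 : x^2/A^2 ≤ p*x^2/A^2 := by
        have h : x^2 ≤ p*x^2 := le_mul_of_one_le_left (sq_nonneg x) (le_of_lt hp)
        exact (div_le_div_iff_of_pos_right (by positivity)).2 h

      calc 2*x*y / B ≤ 2*x*y/2 := step1
        _ = x*y := by ring
        _ ≤ x^2/A^2 := step2
        _ ≤ p*x^2/A^2 := step3
        _ ≤ p*x^2/A^2 + y^2 := by linarith only [sq_nonneg y]
    · -- main case: x/A² < y ≤ x
      set a := k + x with ha
      set b := k + y with hbdef
      set L := Real.log a with hLdef
      set L' := Real.log b with hL'def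
      have hL4' : (4:ℝ) ≤ L := hL4 x hx
      have hL'4 : (4:ℝ) ≤ L' := hL4 y hy
      have hL0 : (0:ℝ) < L := by linarith
      have hL'0 : (0:ℝ) < L' := by linarith
      have hba : b ≤ a := by simp only [ha, hbdef]; linarith
      -- b ≥ a / A²
      have hA21 : (1:ℝ) ≤ A^2 := by
        have h4 : (2:ℝ)*2 ≤ A*A := mul_le_mul hA2 hA2 (by norm_num) (by linarith only [hA2])
        calc (1:ℝ) ≤ A*A := by linarith only [h4]
          _ = A^2 := (sq A).symm
      have hblow : a / A^2 ≤ b := by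
        rw [div_le_iff₀ (by positivity)]
        have h1 : k ≤ k * A^2 := le_mul_of_one_le_right (le_of_lt hk0) hA21
        have h2 : x < y * A^2 := by
          rw [div_lt_iff₀ (by positivity)] at hcase
          linarith
        have e : (k + y) * A ^ 2 = k * A^2 + y * A^2 := by ring
        simp only [ha, hbdef]
        rw [e]
        linarith only [h1, h2]
      -- L' ≥ L - 2 μ log L
      have hlogA : Real.log A ≤ μ * Real.log L := by
        calc Real.log A ≤ Real.log ((Real.log a) ^ μ) :=
              Real.log_le_log hA0 (hILup x hx)
          _ = μ * Real.log L := Real.log_rpow hL0 _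
      have hL'low : L - 2 * μ * Real.log L ≤ L' := by
        have h1 : Real.log (a / A^2) ≤ L' := by
          apply Real.log_le_log (by positivity) hblow
        have h2 : Real.log (a / A^2) = L - 2 * Real.log A := by
          rw [Real.log_div (by positivity) (by positivity), Real.log_pow]
          push_cast; ring
        rw [h2] at h1
        linarith
      have hLM₀ : M₀ ≤ L := by
        have : M ≤ L := by
          have := hlow x hx 1 hn
          simpa [iterLog] using this
        linarith
      have hsm := hM₀ L hLM₀
      have hLρ : L / ρ ≤ L' := by
        have h6 : L - (1 - 1/ρ) * L ≤ L' := (sub_le_sub_left hsm L).trans hL'low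
        have hρne : ρ ≠ 0 := ne_of_gt hρ0
        have e : L - (1 - 1/ρ) * L = L / ρ := by field_simp; ring
        rw [← e]
        exact h6
      -- ratio r ≤ ρ
      set r := L / L' with hrdef
      have hr1 : (1:ℝ) ≤ r := by
        rw [hrdef, le_div_iff₀ hL'0, one_mul]
        exact Real.log_le_log (by positivity) hba
      have hrρ : r ≤ ρ := by
        rw [hrdef, div_le_iff₀ hL'0]
        rw [div_le_iff₀ hρ0] at hLρ
        linarith
      -- l_i a ≤ r * l_i b for 1 ≤ i ≤ n
      have hfac : ∀ i, 1 ≤ i → i ≤ n → iterLog i a ≤ r * iterLog i b := by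
        intro i h1 h2
        have := iterLog_ratio hM4 n (hbase y hy) hba i h1 h2
        rw [hrdef]
        rw [div_mul_eq_mul_div, le_div_iff₀ hL'0]
        linarith
      -- IL x ≤ r^μ * IL y
      have hILratio : A ≤ r ^ μ * B := by
        have hr0 : (0:ℝ) ≤ r := by linarith
        have hprodb : ∀ i ∈ Finset.range (n-1), (0:ℝ) ≤ Real.sqrt (iterLog (i+1) b) :=
          fun i _ => Real.sqrt_nonneg _
        have hP : (∏ i ∈ Finset.range (n-1), Real.sqrt (iterLog (i+1) a))
            ≤ r ^ (((n-1:ℕ):ℝ)/2) * ∏ i ∈ Finset.range (n-1), Real.sqrt (iterLog (i+1) b) := by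
          calc (∏ i ∈ Finset.range (n-1), Real.sqrt (iterLog (i+1) a))
              ≤ ∏ i ∈ Finset.range (n-1), (Real.sqrt r * Real.sqrt (iterLog (i+1) b)) := by
                apply Finset.prod_le_prod
                · intro i _; exact Real.sqrt_nonneg _
                · intro i hi
                  rw [Finset.mem_range] at hi
                  rw [← Real.sqrt_mul hr0]
                  exact Real.sqrt_le_sqrt (hfac (i+1) (by omega) (by omega))
            _ = (Real.sqrt r) ^ (n-1:ℕ) * ∏ i ∈ Finset.range (n-1), Real.sqrt (iterLog (i+1) b) := by
                rw [Finset.prod_mul_distrib, Finset.prod_const, Finset.card_range]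
            _ = r ^ (((n-1:ℕ):ℝ)/2) * ∏ i ∈ Finset.range (n-1), Real.sqrt (iterLog (i+1) b) := by
                rw [Real.sqrt_eq_rpow, ← Real.rpow_natCast (r ^ ((1:ℝ)/2)) (n-1),
                  ← Real.rpow_mul hr0]
                congr 2; ring
        have hQ : (iterLog n a) ^ lam ≤ r ^ lam * (iterLog n b) ^ lam := by
          have h1 : iterLog n a ≤ r * iterLog n b := hfac n hn le_rfl
          have h2 : (0:ℝ) ≤ iterLog n a := by
            have := hlow x hx n le_rfl; linarith
          calc (iterLog n a) ^ lam ≤ (r * iterLog n b) ^ lam :=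
                Real.rpow_le_rpow h2 h1 (by linarith)
            _ = r ^ lam * (iterLog n b) ^ lam := by
                apply Real.mul_rpow hr0
                have := hlow y hy n le_rfl; linarith
        have hQb0 : (0:ℝ) ≤ (iterLog n a) ^ lam := by
          apply Real.rpow_nonneg
          have := hlow x hx n le_rfl; linarith
        have hPb0 : (0:ℝ) ≤ r ^ (((n-1:ℕ):ℝ)/2) * ∏ i ∈ Finset.range (n-1), Real.sqrt (iterLog (i+1) b) := by
          apply mul_nonneg (Real.rpow_nonneg hr0 _)
          exact Finset.prod_nonneg hprodb
        calc A = (∏ i ∈ Finset.range (n-1), Real.sqrt (iterLog (i+1) a)) * (iterLog n a) ^ lam := rfl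
          _ ≤ (r ^ (((n-1:ℕ):ℝ)/2) * ∏ i ∈ Finset.range (n-1), Real.sqrt (iterLog (i+1) b))
              * (r ^ lam * (iterLog n b) ^ lam) :=
            mul_le_mul hP hQ hQb0 hPb0
          _ = (r ^ (((n-1:ℕ):ℝ)/2) * r ^ lam) *
              ((∏ i ∈ Finset.range (n-1), Real.sqrt (iterLog (i+1) b)) * (iterLog n b) ^ lam) := by
            ring
          _ = r ^ μ * B := by rw [← Real.rpow_add (by linarith : (0:ℝ) < r)]; rfl
      -- r^μ ≤ s where s = p^(1/2)
      set s : ℝ := p ^ ((1:ℝ)/2) with hsdef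
      have hs0 : (0:ℝ) < s := Real.rpow_pos_of_pos hp0 _
      have hss : s * s = p := by
        rw [hsdef, ← Real.rpow_add hp0]
        norm_num
      have hrμs : r ^ μ ≤ s := by
        have h1 : r ^ μ ≤ ρ ^ μ := Real.rpow_le_rpow (by linarith) hrρ (le_of_lt hμpos)
        have h2 : ρ ^ μ = s := by
          have hμne : μ ≠ 0 := ne_of_gt hμpos
          rw [hρdef, hsdef, ← Real.rpow_mul (le_of_lt hp0)]
          congr 1
          field_simp
        linarith [h2 ▸ h1]
      have hAsB : A ≤ s * B := by
        have : r ^ μ * B ≤ s * B := mul_le_mul_of_nonneg_right hrμs (by linarith)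
        linarith
      -- finish
      have step1 : 2*x*y / B ≤ 2*x*y*s / A := by
        rw [div_le_div_iff₀ hB0 hA0]
        have h2xy : (0:ℝ) ≤ 2*x*y := by positivity
        linarith only [mul_le_mul_of_nonneg_left hAsB h2xy]
      have step2 : 2*(x/A)*y ≤ s*(x/A)^2 + y^2/s := amgm hs0
      have step3 : 2*x*y*s/A = s * (2*(x/A)*y) := by ring
      have step4 : s * (s*(x/A)^2 + y^2/s) = p*x^2/A^2 + y^2 := by
        have hAne : A ≠ 0 := ne_of_gt hA0
        have hsne : s ≠ 0 := ne_of_gt hs0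
        have e : s * (s*(x/A)^2 + y^2/s) = (s*s)*x^2/A^2 + y^2 := by
          field_simp
        rw [e, hss]
      calc 2*x*y / B ≤ 2*x*y*s / A := step1
        _ = s * (2*(x/A)*y) := step3
        _ ≤ s * (s*(x/A)^2 + y^2/s) := mul_le_mul_of_nonneg_left step2 (le_of_lt hs0)
        _ = p*x^2/A^2 + y^2 := step4
end

section
/- For every integer $n\ge 1$ and real $\lambda>1/2$, there exists a constant $K>0$ depending only on $n$ and $\lambda$ such that for all $x\ge 0$: $\mathcal{IL}_{n+1}^\lambda(x) \le K\,\mathcal{IL}_n^\lambda(x)$. -/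
open Real Finset

lemma one_le_iterExp : ∀ n, 1 ≤ iterExp n
  | 0 => le_refl 1
  | n + 1 => by
      have h := one_le_iterExp n
      have := Real.one_le_exp (x := iterExp n) (by linarith)
      simpa [iterExp] using this

lemma iterExp_le_succ (n : ℕ) : iterExp n ≤ iterExp (n + 1) := by
  have h := Real.add_one_le_exp (iterExp n)
  show iterExp n ≤ Real.exp (iterExp n)
  linarith

lemma iterExp_mono : Monotone iterExp := monotone_nat_of_le_succ iterExp_le_succ

lemma iterExp_le_iterLog : ∀ (i k : ℕ) (x : ℝ), iterExp (i + k) ≤ x → iterExp k ≤ iterLog i x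
  | 0, k, x, h => by simpa [iterLog] using h
  | i + 1, k, x, h => by
      have h1 : iterExp (k + 1) ≤ iterLog i x := by
        apply iterExp_le_iterLog i (k + 1) x
        have : i + (k + 1) = i + 1 + k := by omega
        rwa [this]
      show iterExp k ≤ Real.log (iterLog i x)
      calc iterExp k = Real.log (Real.exp (iterExp k)) := (Real.log_exp _).symm
        _ ≤ Real.log (iterLog i x) := Real.log_le_log (Real.exp_pos _) h1

lemma one_le_iterLog (i : ℕ) (x : ℝ) (h : iterExp i ≤ x) : 1 ≤ iterLog i x := by
  have := iterExp_le_iterLog i 0 x (by simpa using h)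
  simpa [iterExp] using this

lemma iterLog_mono : ∀ (i : ℕ) {x y : ℝ}, iterExp i ≤ x → x ≤ y → iterLog i x ≤ iterLog i y
  | 0, x, y, _, h => h
  | i + 1, x, y, hx, h => by
      have h1 : iterExp 1 ≤ iterLog i x :=
        iterExp_le_iterLog i 1 x hx
      have h0 : 0 < iterLog i x := lt_of_lt_of_le (by positivity) (le_trans (one_le_iterExp 1) h1)
      have h2 : iterLog i x ≤ iterLog i y :=
        iterLog_mono i (le_trans (iterExp_mono (Nat.le_succ i)) hx) h
      exact Real.log_le_log h0 h2

lemma log_add_one_le (c : ℝ) (hc : 0 ≤ c) : Real.log (c + 1) ≤ c := by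
  have h := Real.add_one_le_exp c
  calc Real.log (c + 1) ≤ Real.log (Real.exp c) := Real.log_le_log (by linarith) h
    _ = c := Real.log_exp c

/-- additive shift lemma -/
lemma shift (n : ℕ) (x : ℝ) (hx : 0 ≤ x) :
    ∀ i, i ≤ n →
      iterLog (i + 1) (iterExp (n + 1) + x) ≤ iterExp n + iterLog (i + 1) (iterExp n + x)
  | 0, _ => by
      have hA : (1:ℝ) ≤ iterExp n := one_le_iterExp n
      have hE : (1:ℝ) ≤ iterExp (n + 1) := one_le_iterExp (n + 1)
      have hle : iterExp (n + 1) + x ≤ iterExp (n + 1) * (iterExp n + x) := by nlinarith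
      show Real.log (iterExp (n + 1) + x) ≤ iterExp n + Real.log (iterExp n + x)
      calc Real.log (iterExp (n + 1) + x)
          ≤ Real.log (iterExp (n + 1) * (iterExp n + x)) :=
            Real.log_le_log (by linarith) hle
        _ = Real.log (iterExp (n + 1)) + Real.log (iterExp n + x) :=
            Real.log_mul (by linarith) (by nlinarith)
        _ = iterExp n + Real.log (iterExp n + x) := by
            rw [show iterExp (n+1) = Real.exp (iterExp n) from rfl, Real.log_exp]
  | i + 1, hi => by
      have hA : (1:ℝ) ≤ iterExp n := one_le_iterExp n
      have hprev : iterLog (i + 1) (iterExp (n + 1) + x)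
          ≤ iterExp n + iterLog (i + 1) (iterExp n + x) := shift n x hx i (by omega)
      have hs1 : (1:ℝ) ≤ iterLog (i + 1) (iterExp n + x) := by
        apply one_le_iterLog
        calc iterExp (i + 1) ≤ iterExp n := iterExp_mono (by omega)
          _ ≤ iterExp n + x := by linarith
      have hpos : 0 < iterLog (i + 1) (iterExp (n + 1) + x) := by
        have : (1:ℝ) ≤ iterLog (i + 1) (iterExp (n + 1) + x) := by
          apply one_le_iterLog
          calc iterExp (i + 1) ≤ iterExp (n + 1) := iterExp_mono (by omega)
            _ ≤ iterExp (n + 1) + x := by linarith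
        linarith
      show Real.log (iterLog (i + 1) (iterExp (n + 1) + x))
          ≤ iterExp n + Real.log (iterLog (i + 1) (iterExp n + x))
      calc Real.log (iterLog (i + 1) (iterExp (n + 1) + x))
          ≤ Real.log ((iterExp n + 1) * iterLog (i + 1) (iterExp n + x)) := by
            apply Real.log_le_log hpos
            nlinarith
        _ = Real.log (iterExp n + 1) + Real.log (iterLog (i + 1) (iterExp n + x)) :=
            Real.log_mul (by linarith) (by linarith)
        _ ≤ iterExp n + Real.log (iterLog (i + 1) (iterExp n + x)) := by
            have := log_add_one_le (iterExp n) (by linarith)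
            linarith

lemma keyBound (lam C : ℝ) (hlam : 1 / 2 < lam) (hC : 0 ≤ C) :
    ∃ K₀ : ℝ, 0 < K₀ ∧ ∀ t : ℝ, 1 ≤ t →
      Real.sqrt t * (C + Real.log t) ^ lam ≤ K₀ * t ^ lam := by
  have hlam0 : (0:ℝ) < lam := by linarith
  set ε : ℝ := (lam - 1 / 2) / lam with hεdef
  have hε0 : 0 < ε := by
    apply div_pos <;> linarith
  refine ⟨(C + 1 / ε) ^ lam, by positivity, ?_⟩
  intro t ht
  have ht0 : (0:ℝ) < t := by linarith
  have htε : (1:ℝ) ≤ t ^ ε := Real.one_le_rpow ht hε0.le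
  have hlogt : 0 ≤ Real.log t := Real.log_nonneg ht
  have hlog : Real.log t ≤ (1 / ε) * t ^ ε := by
    have h1 : Real.log (t ^ ε) = ε * Real.log t := Real.log_rpow ht0 ε
    have h2 : Real.log (t ^ ε) ≤ t ^ ε - 1 := Real.log_le_sub_one_of_pos (by positivity)
    rw [h1] at h2
    rw [one_div, inv_mul_eq_div, le_div_iff₀' hε0]
    linarith
  have h3 : C + Real.log t ≤ (C + 1 / ε) * t ^ ε := by
    have hCt : C ≤ C * t ^ ε := le_mul_of_one_le_right hC htε
    nlinarith
  have h4 : (C + Real.log t) ^ lam ≤ ((C + 1 / ε) * t ^ ε) ^ lam :=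
    Real.rpow_le_rpow (by linarith) h3 hlam0.le
  have h5 : ((C + 1 / ε) * t ^ ε) ^ lam = (C + 1 / ε) ^ lam * t ^ (ε * lam) := by
    rw [Real.mul_rpow (by positivity) (by positivity), ← Real.rpow_mul ht0.le]
  have hεlam : ε * lam = lam - 1 / 2 := by
    rw [hεdef, div_mul_cancel₀ _ hlam0.ne']
  calc Real.sqrt t * (C + Real.log t) ^ lam
      ≤ Real.sqrt t * ((C + 1 / ε) ^ lam * t ^ (lam - 1 / 2)) := by
        rw [← hεlam, ← h5]
        exact mul_le_mul_of_nonneg_left h4 (Real.sqrt_nonneg t)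
    _ = (C + 1 / ε) ^ lam * (t ^ ((1:ℝ) / 2) * t ^ (lam - 1 / 2)) := by
        rw [Real.sqrt_eq_rpow]; ring
    _ = (C + 1 / ε) ^ lam * t ^ lam := by
        rw [← Real.rpow_add ht0]; norm_num

/-- Remark 2.1 (ii): for `n ≥ 1` and `λ > 1/2` there is `K > 0` with
`IL_{n+1}^λ(x) ≤ K · IL_n^λ(x)` for all `x ≥ 0`, where
`IL_n^λ(x) = IL n (e^{(n)}) λ x`. -/
theorem stmt_3 (n : ℕ) (hn : 1 ≤ n) (lam : ℝ) (hlam : 1 / 2 < lam) :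
    ∃ K : ℝ, 0 < K ∧ ∀ x : ℝ, 0 ≤ x →
      IL (n + 1) (iterExp (n + 1)) lam x ≤ K * IL n (iterExp n) lam x := by
  obtain ⟨m, rfl⟩ : ∃ m, n = m + 1 := ⟨n - 1, by omega⟩
  have hlam0 : (0:ℝ) < lam := by linarith
  set A := iterExp (m + 1) with hA
  have hA1 : (1:ℝ) ≤ A := one_le_iterExp _
  set M := A + 1 with hM
  have hM1 : (1:ℝ) ≤ M := by linarith
  have hsM : 0 < Real.sqrt M := Real.sqrt_pos.2 (by linarith)
  obtain ⟨K₀, hK₀, hkey⟩ := keyBound lam A hlam (by linarith)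
  refine ⟨Real.sqrt M ^ (m + 1) * K₀, by positivity, ?_⟩
  intro x hx
  set E := iterExp (m + 1 + 1) with hE
  have hE1 : (1:ℝ) ≤ E := one_le_iterExp _
  set y := A + x with hy
  have hyA : A ≤ y := by simp [hy]; linarith
  -- iterated logs of y are ≥ 1 up to level m+1
  have hs1 : ∀ i, i ≤ m → (1:ℝ) ≤ iterLog (i + 1) y := fun i hi =>
    one_le_iterLog _ _ (le_trans (iterExp_mono (by omega)) hyA)
  set t := iterLog (m + 1) y with ht
  have ht1 : (1:ℝ) ≤ t := hs1 m le_rfl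
  -- multiplicative shift bounds
  have hmul : ∀ i, i ≤ m → iterLog (i + 1) (E + x) ≤ M * iterLog (i + 1) y := by
    intro i hi
    have hadd := shift (m + 1) x hx i (by omega)
    have h1 := hs1 i hi
    rw [← hA, ← hE, ← hy] at hadd
    nlinarith
  have hpow : iterLog (m + 1 + 1) (E + x) ≤ A + Real.log t := by
    have hadd := shift (m + 1) x hx (m + 1) le_rfl
    rw [← hA, ← hE, ← hy] at hadd
    exact hadd
  have hLpow0 : (0:ℝ) ≤ iterLog (m + 1 + 1) (E + x) := by
    have := one_le_iterLog (m + 1 + 1) (E + x) (by rw [← hE]; linarith)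
    linarith
  have hPR0 : (0:ℝ) ≤ ∏ i ∈ Finset.range m, Real.sqrt (iterLog (i + 1) y) :=
    Finset.prod_nonneg fun _ _ => Real.sqrt_nonneg _
  have hfac : ∀ i, i ≤ m →
      Real.sqrt (iterLog (i + 1) (E + x)) ≤ Real.sqrt M * Real.sqrt (iterLog (i + 1) y) := by
    intro i hi
    rw [← Real.sqrt_mul (by linarith)]
    exact Real.sqrt_le_sqrt (hmul i hi)
  have hPL : (∏ i ∈ Finset.range m, Real.sqrt (iterLog (i + 1) (E + x)))
      ≤ Real.sqrt M ^ m * ∏ i ∈ Finset.range m, Real.sqrt (iterLog (i + 1) y) := by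
    calc (∏ i ∈ Finset.range m, Real.sqrt (iterLog (i + 1) (E + x)))
        ≤ ∏ i ∈ Finset.range m, (Real.sqrt M * Real.sqrt (iterLog (i + 1) y)) :=
          Finset.prod_le_prod (fun _ _ => Real.sqrt_nonneg _)
            (fun i hi => hfac i (by simpa using (Finset.mem_range.mp hi).le))
      _ = Real.sqrt M ^ m * ∏ i ∈ Finset.range m, Real.sqrt (iterLog (i + 1) y) := by
          rw [Finset.prod_mul_distrib, Finset.prod_const, Finset.card_range]
  have hlast : Real.sqrt (iterLog (m + 1) (E + x)) ≤ Real.sqrt M * Real.sqrt t :=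
    hfac m le_rfl
  have hpow' : (iterLog (m + 1 + 1) (E + x)) ^ lam ≤ (A + Real.log t) ^ lam :=
    Real.rpow_le_rpow hLpow0 hpow hlam0.le
  calc IL (m + 1 + 1) E lam x
      = (∏ i ∈ Finset.range m, Real.sqrt (iterLog (i + 1) (E + x))) *
          Real.sqrt (iterLog (m + 1) (E + x)) * (iterLog (m + 1 + 1) (E + x)) ^ lam := by
        rw [IL]
        rw [show m + 1 + 1 - 1 = m + 1 from rfl, Finset.prod_range_succ]
    _ ≤ ((Real.sqrt M ^ m * ∏ i ∈ Finset.range m, Real.sqrt (iterLog (i + 1) y)) *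
          (Real.sqrt M * Real.sqrt t)) * (A + Real.log t) ^ lam := by
        apply mul_le_mul _ hpow' (Real.rpow_nonneg hLpow0 lam)
        · positivity
        · exact mul_le_mul hPL hlast (Real.sqrt_nonneg _) (by positivity)
    _ = Real.sqrt M ^ (m + 1) * (∏ i ∈ Finset.range m, Real.sqrt (iterLog (i + 1) y)) *
          (Real.sqrt t * (A + Real.log t) ^ lam) := by ring
    _ ≤ Real.sqrt M ^ (m + 1) * (∏ i ∈ Finset.range m, Real.sqrt (iterLog (i + 1) y)) *
          (K₀ * t ^ lam) := by
        apply mul_le_mul_of_nonneg_left (hkey t ht1) (by positivity)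
    _ = Real.sqrt M ^ (m + 1) * K₀ * IL (m + 1) A lam x := by
        rw [IL, show m + 1 - 1 = m from rfl, ← hy, ← ht]
        ring
end

section
/- Let $n\ge 2$, $\lambda>0$, $p>1$, and set $\delta := p^{1/(n-1+2\lambda)}>1$. Suppose $k\ge e^{(n)}$ is large enough that for all $x\ge 0$ and all $i=1,\dots,n$: $k+\sqrt{p}\,x\,\psi(x) \le (k+x)^\delta$ and $\delta\ln^{(i)}(k+x) \le (\ln^{(i)}(k+x))^\delta$, where $\psi(x)=\mathcal{IL}_{n,k}^\lambda(x)$. Then for all $x\ge 0$ and $i=1,\dots,n$: $\ln^{(i)}(k+\sqrt{p}\,x\,\psi(x)) \le \delta\,\ln^{(i)}(k+x)$, and consequently $\psi(\sqrt{p}\,x\,\psi(x)) \le \sqrt{p}\,\psi(x)$. -/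
open Real Finset

lemma one_le_iterExp_s7 (m : ℕ) : 1 ≤ iterExp m := by
  induction m with
  | zero => simp [iterExp]
  | succ n ih =>
    show (1 : ℝ) ≤ Real.exp (iterExp n)
    exact le_trans (by norm_num) (Real.one_le_exp (zero_le_one.trans ih))

lemma iterExp_le_iterLog_s7 {n : ℕ} {y : ℝ} (hy : iterExp n ≤ y) :
    ∀ i ≤ n, iterExp (n - i) ≤ iterLog i y := by
  intro i
  induction i with
  | zero => intro _; simpa [iterLog] using hy
  | succ i ih =>
    intro hi
    have hni : n - i = (n - (i + 1)) + 1 := by omega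
    have h0 : iterExp (n - i) ≤ iterLog i y := ih (by omega)
    show iterExp (n - (i + 1)) ≤ Real.log (iterLog i y)
    calc iterExp (n - (i + 1)) = Real.log (Real.exp (iterExp (n - (i + 1)))) :=
          (Real.log_exp _).symm
      _ ≤ Real.log (iterLog i y) := by
          refine Real.log_le_log (Real.exp_pos _) ?_
          rw [hni] at h0; exact h0

lemma one_le_iterLog_s7 {n : ℕ} {y : ℝ} (hy : iterExp n ≤ y) {i : ℕ} (hi : i ≤ n) :
    1 ≤ iterLog i y :=
  le_trans (one_le_iterExp_s7 _) (iterExp_le_iterLog_s7 hy i hi)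

/-- Step in the proof of Proposition 3.2: with `δ = p^{1/(n-1+2λ)}` and `k`
large enough, `ln^{(i)}(k + √p x ψ(x)) ≤ δ ln^{(i)}(k+x)` for `i = 1,…,n`, and
consequently `ψ(√p x ψ(x)) ≤ √p ψ(x)`, where `ψ = IL_{n,k}^λ`. -/
theorem stmt_7 (n : ℕ) (hn : 2 ≤ n) (lam p : ℝ) (hlam : 0 < lam) (hp : 1 < p)
    (δ : ℝ) (hδ : δ = p ^ ((1 : ℝ) / ((n : ℝ) - 1 + 2 * lam))) (k : ℝ)
    (hk : iterExp n ≤ k)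
    (h1 : ∀ x : ℝ, 0 ≤ x →
      k + Real.sqrt p * x * IL n k lam x ≤ (k + x) ^ δ)
    (h2 : ∀ x : ℝ, 0 ≤ x → ∀ i : ℕ, 1 ≤ i → i ≤ n →
      δ * iterLog i (k + x) ≤ (iterLog i (k + x)) ^ δ) :
    (∀ x : ℝ, 0 ≤ x → ∀ i : ℕ, 1 ≤ i → i ≤ n →
      iterLog i (k + Real.sqrt p * x * IL n k lam x) ≤ δ * iterLog i (k + x)) ∧
    (∀ x : ℝ, 0 ≤ x →
      IL n k lam (Real.sqrt p * x * IL n k lam x) ≤ Real.sqrt p * IL n k lam x) := by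
  have hp0 : (0 : ℝ) < p := lt_trans zero_lt_one hp
  have hδ0 : 0 < δ := by rw [hδ]; exact Real.rpow_pos_of_pos hp0 _
  have hk1 : (1 : ℝ) ≤ k := le_trans (one_le_iterExp_s7 n) hk
  -- nonnegativity of ψ
  have hIL0 : ∀ x : ℝ, 0 ≤ x → 0 ≤ IL n k lam x := by
    intro x hx
    apply mul_nonneg
    · exact Finset.prod_nonneg fun i _ => Real.sqrt_nonneg _
    · refine Real.rpow_nonneg ?_ _
      have : iterExp n ≤ k + x := by linarith
      linarith [one_le_iterLog_s7 this (le_refl n)]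
  have main : ∀ x : ℝ, 0 ≤ x → ∀ i : ℕ, 1 ≤ i → i ≤ n →
      iterLog i (k + Real.sqrt p * x * IL n k lam x) ≤ δ * iterLog i (k + x) := by
    intro x hx
    set y := Real.sqrt p * x * IL n k lam x with hydef
    have hy0 : 0 ≤ y :=
      mul_nonneg (mul_nonneg (Real.sqrt_nonneg _) hx) (hIL0 x hx)
    have hkx : iterExp n ≤ k + x := by linarith
    have hky : iterExp n ≤ k + y := by linarith
    intro i
    induction i with
    | zero => intro h; omega
    | succ i ih =>
      intro _ hin
      rcases Nat.eq_zero_or_pos i with h0 | h0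
      · subst h0
        show Real.log (iterLog 0 (k + y)) ≤ δ * Real.log (iterLog 0 (k + x))
        show Real.log (k + y) ≤ δ * Real.log (k + x)
        calc Real.log (k + y) ≤ Real.log ((k + x) ^ δ) :=
              Real.log_le_log (by linarith) (h1 x hx)
          _ = δ * Real.log (k + x) := Real.log_rpow (by linarith) _
      · have hi1 : 1 ≤ i := h0
        have hin' : i ≤ n := by omega
        have hI := ih hi1 hin'
        have hposy : 1 ≤ iterLog i (k + y) := one_le_iterLog_s7 hky hin'
        have hposx : 1 ≤ iterLog i (k + x) := one_le_iterLog_s7 hkx hin'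
        show Real.log (iterLog i (k + y)) ≤ δ * Real.log (iterLog i (k + x))
        calc Real.log (iterLog i (k + y))
            ≤ Real.log (δ * iterLog i (k + x)) :=
              Real.log_le_log (by linarith) hI
          _ ≤ Real.log ((iterLog i (k + x)) ^ δ) :=
              Real.log_le_log (by positivity) (h2 x hx i hi1 hin')
          _ = δ * Real.log (iterLog i (k + x)) :=
              Real.log_rpow (by linarith) _
  refine ⟨main, ?_⟩
  intro x hx
  set y := Real.sqrt p * x * IL n k lam x with hydef
  have hy0 : 0 ≤ y :=
    mul_nonneg (mul_nonneg (Real.sqrt_nonneg _) hx) (hIL0 x hx)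
  have hkx : iterExp n ≤ k + x := by linarith
  have hky : iterExp n ≤ k + y := by linarith
  have hprod : (∏ i ∈ Finset.range (n - 1), Real.sqrt (iterLog (i + 1) (k + y)))
      ≤ Real.sqrt δ ^ (n - 1) *
        ∏ i ∈ Finset.range (n - 1), Real.sqrt (iterLog (i + 1) (k + x)) := by
    have hrw : Real.sqrt δ ^ (n - 1) *
        ∏ i ∈ Finset.range (n - 1), Real.sqrt (iterLog (i + 1) (k + x)) =
        ∏ i ∈ Finset.range (n - 1),
          (Real.sqrt δ * Real.sqrt (iterLog (i + 1) (k + x))) := by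
      rw [Finset.prod_mul_distrib, Finset.prod_const, Finset.card_range]
    rw [hrw]
    refine Finset.prod_le_prod (fun i _ => Real.sqrt_nonneg _) ?_
    intro i hi
    have hi' : i + 1 ≤ n := by
      have := Finset.mem_range.mp hi; omega
    have := main x hx (i + 1) (by omega) hi'
    calc Real.sqrt (iterLog (i + 1) (k + y))
        ≤ Real.sqrt (δ * iterLog (i + 1) (k + x)) := Real.sqrt_le_sqrt this
      _ = Real.sqrt δ * Real.sqrt (iterLog (i + 1) (k + x)) :=
          Real.sqrt_mul (le_of_lt hδ0) _
  have hrpow : (iterLog n (k + y)) ^ lam ≤ δ ^ lam * (iterLog n (k + x)) ^ lam := by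
    have h := main x hx n (by omega) (le_refl n)
    calc (iterLog n (k + y)) ^ lam ≤ (δ * iterLog n (k + x)) ^ lam := by
          refine Real.rpow_le_rpow ?_ h (le_of_lt hlam)
          linarith [one_le_iterLog_s7 hky (le_refl n)]
      _ = δ ^ lam * (iterLog n (k + x)) ^ lam := by
          refine Real.mul_rpow (le_of_lt hδ0) ?_
          linarith [one_le_iterLog_s7 hkx (le_refl n)]
  have key : Real.sqrt δ ^ (n - 1) * δ ^ lam = Real.sqrt p := by
    have hs : (0 : ℝ) < (n : ℝ) - 1 + 2 * lam := by
      have : (2 : ℝ) ≤ (n : ℝ) := by exact_mod_cast hn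
      linarith
    have hcast : ((n - 1 : ℕ) : ℝ) = (n : ℝ) - 1 := by
      have : (1 : ℕ) ≤ n := by omega
      push_cast [Nat.cast_sub this]; ring
    rw [Real.sqrt_eq_rpow δ, ← Real.rpow_natCast (δ ^ ((1:ℝ)/2)) (n - 1),
      ← Real.rpow_mul (le_of_lt hδ0), ← Real.rpow_add hδ0, hδ,
      ← Real.rpow_mul (le_of_lt hp0), Real.sqrt_eq_rpow]
    congr 1
    rw [hcast]
    field_simp
  calc IL n k lam y
      = (∏ i ∈ Finset.range (n - 1), Real.sqrt (iterLog (i + 1) (k + y))) *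
        (iterLog n (k + y)) ^ lam := rfl
    _ ≤ (Real.sqrt δ ^ (n - 1) *
          ∏ i ∈ Finset.range (n - 1), Real.sqrt (iterLog (i + 1) (k + x))) *
        (δ ^ lam * (iterLog n (k + x)) ^ lam) := by
        refine mul_le_mul hprod hrpow ?_ ?_
        · refine Real.rpow_nonneg ?_ _
          linarith [one_le_iterLog_s7 hky (le_refl n)]
        · refine mul_nonneg (pow_nonneg (Real.sqrt_nonneg _) _) ?_
          exact Finset.prod_nonneg fun i _ => Real.sqrt_nonneg _
    _ = (Real.sqrt δ ^ (n - 1) * δ ^ lam) * IL n k lam x := by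
        unfold IL; ring
    _ = Real.sqrt p * IL n k lam x := by rw [key]
end

section
/- Let $n\ge 2$, $\lambda>1/2$, $\beta\ge 0$, $\gamma>0$, $T>0$, and let $k\ge e^{(n)}$ be sufficiently large (depending on $n,\lambda,\gamma$). Define $\varphi(s,x):=(k+x)\big[1-(\ln^{(n)}(k+x))^{1-2\lambda}\big]\exp\big[2(\beta+\frac{2\gamma^2}{2\lambda-1})s\big]$ for $(s,x)\in[0,T]\times[0,\infty)$. Then $\varphi$, $\varphi_s$, $\varphi_x$, $\varphi_{xx}$ are all strictly positive, and with $\mu_s=\exp[2(\beta+\frac{2\gamma^2}{2\lambda-1})s]$ one has $\tfrac12\mu_s \le \varphi_x(s,x) \le \mu_s$, $\frac{(2\lambda-1)\mu_s}{2(k+x)(\mathcal{IL}_{n,k}^\lambda(x))^2} \le \varphi_{xx}(s,x) \le \frac{(2\lambda-1)\mu_s}{(k+x)(\mathcal{IL}_{n,k}^\lambda(x))^2}$, and $\varphi_s(s,x)\ge \tfrac12(k+x)\mu_s'$. -/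
open Real Finset

/-- The factor `μ_s = exp[2(β + 2γ²/(2λ-1)) s]`. -/
noncomputable def muAux (β γ lam s : ℝ) : ℝ :=
  Real.exp (2 * (β + 2 * γ ^ 2 / (2 * lam - 1)) * s)

/-- The test function `φ(s,x) = (k+x)[1 - (ln^{(n)}(k+x))^{1-2λ}] μ_s`. -/
noncomputable def phiAux (n : ℕ) (k β γ lam s x : ℝ) : ℝ :=
  (k + x) * (1 - (iterLog n (k + x)) ^ (1 - 2 * lam)) * muAux β γ lam s

lemma iterLog_succ' (n : ℕ) (x : ℝ) : iterLog (n+1) x = iterLog n (Real.log x) := by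
  induction n with
  | zero => rfl
  | succ m ih =>
    show Real.log (iterLog (m+1) x) = _
    rw [ih]; rfl

lemma iterLog_iterExp (m : ℕ) (M : ℝ) : iterLog m (Real.exp^[m] M) = M := by
  induction m with
  | zero => rfl
  | succ k ih =>
    rw [Function.iterate_succ_apply', iterLog_succ', Real.log_exp]
    exact ih

lemma le_iterate_exp (j : ℕ) {M : ℝ} (hM : 0 ≤ M) : M ≤ Real.exp^[j] M := by
  induction j with
  | zero => simp
  | succ k ih =>
    rw [Function.iterate_succ_apply']
    have := Real.add_one_le_exp (Real.exp^[k] M)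
    linarith

lemma iterLog_lower {n : ℕ} (i : ℕ) (hi : i ≤ n) {M y : ℝ} (hM : 0 ≤ M)
    (hy : Real.exp^[n] M ≤ y) : Real.exp^[n - i] M ≤ iterLog i y := by
  induction i with
  | zero => simpa [iterLog] using hy
  | succ j ih =>
    have h1 : Real.exp^[n - j] M ≤ iterLog j y := ih (Nat.le_of_succ_le hi)
    have hnj : n - j = (n - (j+1)) + 1 := by omega
    rw [hnj, Function.iterate_succ_apply'] at h1
    have hpos : 0 < Real.exp (Real.exp^[n - (j+1)] M) := Real.exp_pos _
    have := Real.log_le_log hpos h1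
    rwa [Real.log_exp] at this

lemma hasDerivAt_iterLog (m : ℕ) (y : ℝ) (h : ∀ i < m, 0 < iterLog i y) :
    HasDerivAt (iterLog m) (∏ i ∈ Finset.range m, (iterLog i y)⁻¹) y := by
  induction m with
  | zero => simpa [iterLog] using hasDerivAt_id' y
  | succ j ih =>
    have hj := ih (fun i hi => h i (Nat.lt_succ_of_lt hi))
    have hne : iterLog j y ≠ 0 := (h j (Nat.lt_succ_self j)).ne'
    have h2 := hj.log hne
    have he : (∏ i ∈ Finset.range (j+1), (iterLog i y)⁻¹)
        = (∏ i ∈ Finset.range j, (iterLog i y)⁻¹) / iterLog j y := by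
      rw [Finset.prod_range_succ, div_eq_mul_inv]
    rw [he]
    exact h2

lemma Qfun_hasDerivAt {n : ℕ} {M y : ℝ} (hM : 2 ≤ M)
    (hFy : ∀ i ≤ n, M ≤ iterLog i y) :
    ∀ m, m ≤ n → ∃ d : ℝ,
      HasDerivAt (fun z => ∏ i ∈ Finset.range m, iterLog (i+1) z) d y ∧
      0 ≤ d ∧
      y * d * (M - 1) * M ^ m ≤ (∏ i ∈ Finset.range m, iterLog (i+1) y) * (M ^ m - 1) ∧
      M ^ m ≤ ∏ i ∈ Finset.range m, iterLog (i+1) y := by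
  intro m
  induction m with
  | zero =>
    intro _
    exact ⟨0, by simpa using hasDerivAt_const y (1:ℝ), le_refl 0, by simp, by simp⟩
  | succ m ih =>
    intro hmn
    obtain ⟨d, hd, hd0, hdb, hQ⟩ := ih (Nat.le_of_succ_le hmn)
    set Q : ℝ := ∏ i ∈ Finset.range m, iterLog (i+1) y with hQdef
    have hpos : ∀ i < m + 1, 0 < iterLog i y := fun i hi =>
      lt_of_lt_of_le (by linarith) (hFy i (le_trans (Nat.le_of_lt_succ hi) (Nat.le_of_succ_le hmn)))
    have hy0 : 0 < y := hpos 0 (Nat.succ_pos m)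
    have hF : M ≤ iterLog (m+1) y := hFy (m+1) hmn
    have hF0 : 0 < iterLog (m+1) y := lt_of_lt_of_le (by linarith) hF
    have hQ0 : 0 < Q := lt_of_lt_of_le (by positivity) hQ
    have hDF := hasDerivAt_iterLog (m+1) y hpos
    set D : ℝ := ∏ i ∈ Finset.range (m+1), (iterLog i y)⁻¹ with hDdef
    have hDval : D = (y * Q)⁻¹ := by
      rw [hDdef, Finset.prod_range_succ', Finset.prod_inv_distrib]
      show Q⁻¹ * y⁻¹ = (y * Q)⁻¹
      rw [mul_inv]
      exact mul_comm _ _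
    have hD0 : 0 < D := by rw [hDval]; positivity
    have hyQD : y * (Q * D) = 1 := by
      rw [hDval]; field_simp
    have hmul := hd.mul hDF
    refine ⟨d * iterLog (m+1) y + Q * D, ?_, ?_, ?_, ?_⟩
    · have hfun : (fun z => ∏ i ∈ Finset.range (m+1), iterLog (i+1) z)
          = fun z => (∏ i ∈ Finset.range m, iterLog (i+1) z) * iterLog (m+1) z := by
        funext z; rw [Finset.prod_range_succ]
      rw [hfun]
      exact hmul
    · positivity
    · rw [Finset.prod_range_succ]
      set F := iterLog (m+1) y
      have h1 : y * d * (M - 1) * M ^ m * (F * M) ≤ Q * (M ^ m - 1) * (F * M) := by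
        apply mul_le_mul_of_nonneg_right hdb
        positivity
      have hQF : M ^ (m+1) ≤ Q * F := by
        rw [pow_succ]
        exact mul_le_mul hQ hF (by linarith) (le_of_lt hQ0)
      have hexp : y * (d * F + Q * D) = y * d * F + 1 := by
        rw [mul_add, hyQD]; ring
      have hgoal : y * (d * F + Q * D) * (M - 1) * M ^ (m+1)
          = y * d * (M-1) * M^m * (F * M) + (M - 1) * M ^ (m+1) := by
        rw [mul_assoc, mul_assoc, ← mul_assoc y _ _, hexp, pow_succ]; ring
      rw [hgoal]
      have h2 : Q * (M^m - 1) * (F * M) = Q * F * (M^(m+1) - M) := by rw [pow_succ]; ring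
      nlinarith [mul_le_mul_of_nonneg_right hQF (by linarith : (0:ℝ) ≤ M - 1)]
    · rw [Finset.prod_range_succ, pow_succ]
      exact mul_le_mul hQ hF (by linarith) (le_of_lt hQ0)

noncomputable def psiF (n : ℕ) (lam y : ℝ) : ℝ :=
  1 - iterLog n y ^ (1 - 2*lam)
    + (2*lam - 1) * (iterLog n y ^ (-(2*lam)) * (∏ i ∈ Finset.range (n-1), iterLog (i+1) y)⁻¹)

lemma Dn_eq {n : ℕ} (hn : 1 ≤ n) {y : ℝ} :
    ∏ i ∈ Finset.range n, (iterLog i y)⁻¹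
      = (y * ∏ i ∈ Finset.range (n-1), iterLog (i+1) y)⁻¹ := by
  obtain ⟨m, rfl⟩ : ∃ m, n = m + 1 := ⟨n-1, by omega⟩
  simp only [Nat.add_sub_cancel]
  rw [Finset.prod_range_succ', Finset.prod_inv_distrib, mul_inv]
  exact mul_comm _ _

lemma hasDerivAt_Phi {n : ℕ} (hn : 2 ≤ n) {lam M y : ℝ} (hM : 2 ≤ M)
    (hFy : ∀ i ≤ n, M ≤ iterLog i y) :
    HasDerivAt (fun z => z * (1 - iterLog n z ^ (1 - 2*lam))) (psiF n lam y) y := by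
  have hpos : ∀ i < n, 0 < iterLog i y := fun i hi =>
    lt_of_lt_of_le (by linarith) (hFy i hi.le)
  have hy0 : 0 < y := lt_of_lt_of_le (by linarith) (hFy 0 (by omega))
  have hL0 : 0 < iterLog n y := lt_of_lt_of_le (by linarith) (hFy n le_rfl)
  have hQ0 : 0 < ∏ i ∈ Finset.range (n-1), iterLog (i+1) y := by
    apply Finset.prod_pos
    intro i hi
    exact lt_of_lt_of_le (by linarith) (hFy (i+1) (by
      rcases Finset.mem_range.mp hi with h; omega))
  have hDL := hasDerivAt_iterLog n y hpos
  have hrp := hDL.rpow_const (p := 1 - 2*lam) (Or.inl hL0.ne')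
  have hmain := (hasDerivAt_id y).mul (hrp.const_sub 1)
  refine hmain.congr_deriv ?_
  symm
  simp only [id_eq]
  rw [Dn_eq (by omega)]
  rw [show (1 - 2*lam - 1 : ℝ) = -(2*lam) by ring]
  unfold psiF
  field_simp
  ring

lemma psiF_bounds {n : ℕ} (hn : 2 ≤ n) {lam M y : ℝ} (hlam : 1/2 < lam)
    (hMb : 8*lam + 5 ≤ M) (hMc : M ^ (1 - 2*lam) ≤ 1/2)
    (hFy : ∀ i ≤ n, M ≤ iterLog i y) :
    1/2 ≤ psiF n lam y ∧ psiF n lam y ≤ 1 := by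
  have hM : 2 ≤ M := by linarith
  have hM0 : 0 < M := by linarith
  have hL : M ≤ iterLog n y := hFy n le_rfl
  have hL0 : 0 < iterLog n y := lt_of_lt_of_le hM0 hL
  set L := iterLog n y with hLdef
  set Q := ∏ i ∈ Finset.range (n-1), iterLog (i+1) y with hQdef
  have hQ1 : 1 ≤ Q := by
    rw [hQdef]
    calc (1:ℝ) = ∏ _i ∈ Finset.range (n-1), (1:ℝ) := by simp
      _ ≤ ∏ i ∈ Finset.range (n-1), iterLog (i+1) y := by
          apply Finset.prod_le_prod (fun i _ => zero_le_one)
          intro i hi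
          exact le_trans (by linarith) (hFy (i+1) (by
            rcases Finset.mem_range.mp hi with h; omega))
  have hQ0 : 0 < Q := lt_of_lt_of_le one_pos hQ1
  have hLc : L ^ (1 - 2*lam) ≤ 1/2 :=
    le_trans (Real.rpow_le_rpow_of_nonpos hM0 hL (by linarith)) hMc
  have hLc0 : 0 < L ^ (1 - 2*lam) := Real.rpow_pos_of_pos hL0 _
  have hT0 : 0 ≤ (2*lam - 1) * (L ^ (-(2*lam)) * Q⁻¹) := by
    have h1 := Real.rpow_pos_of_pos hL0 (-(2*lam))
    have h2 := inv_pos.mpr hQ0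
    exact mul_nonneg (by linarith) (le_of_lt (mul_pos h1 h2))
  constructor
  · have : psiF n lam y = 1 - L ^ (1 - 2*lam) + (2*lam - 1) * (L ^ (-(2*lam)) * Q⁻¹) := rfl
    rw [this]
    linarith
  · have hsplit : L ^ (1 - 2*lam) = L * L ^ (-(2*lam)) := by
      rw [show (1 - 2*lam : ℝ) = 1 + (-(2*lam)) by ring, Real.rpow_add hL0, Real.rpow_one]
    have hQinv : Q⁻¹ ≤ 1 := by
      rw [inv_le_one_iff₀]
      right; exact hQ1
    have h1 : (2*lam-1) * Q⁻¹ ≤ L := by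
      have h1' : (2*lam-1) * Q⁻¹ ≤ (2*lam-1) * 1 :=
        mul_le_mul_of_nonneg_left hQinv (by linarith)
      nlinarith
    have he0 : 0 ≤ L ^ (-(2*lam)) := le_of_lt (Real.rpow_pos_of_pos hL0 _)
    have h2 : (2*lam - 1) * (L ^ (-(2*lam)) * Q⁻¹) ≤ L ^ (1-2*lam) := by
      rw [hsplit]
      calc (2*lam-1) * (L ^ (-(2*lam)) * Q⁻¹) = ((2*lam-1) * Q⁻¹) * L ^ (-(2*lam)) := by ring
        _ ≤ L * L ^ (-(2*lam)) := mul_le_mul_of_nonneg_right h1 he0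
    have : psiF n lam y = 1 - L ^ (1 - 2*lam) + (2*lam - 1) * (L ^ (-(2*lam)) * Q⁻¹) := rfl
    rw [this]
    linarith

set_option maxHeartbeats 1000000 in
lemma hasDerivAt_psiF {n : ℕ} (hn : 2 ≤ n) {lam M y : ℝ} (hlam : 1/2 < lam)
    (hMb : 8*lam + 5 ≤ M)
    (hFy : ∀ i ≤ n, M ≤ iterLog i y) :
    ∃ p : ℝ, HasDerivAt (psiF n lam) p y ∧
      (2*lam - 1) * (iterLog n y ^ (-(2*lam))) /
        (y * ∏ i ∈ Finset.range (n-1), iterLog (i+1) y) / 2 ≤ p ∧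
      p ≤ (2*lam - 1) * (iterLog n y ^ (-(2*lam))) /
        (y * ∏ i ∈ Finset.range (n-1), iterLog (i+1) y) := by
  have hM : 2 ≤ M := by linarith
  have hM0 : 0 < M := by linarith
  have hpos : ∀ i < n, 0 < iterLog i y := fun i hi =>
    lt_of_lt_of_le hM0 (hFy i hi.le)
  have hy0 : 0 < y := lt_of_lt_of_le hM0 (hFy 0 (by omega))
  have hL : M ≤ iterLog n y := hFy n le_rfl
  have hL0 : 0 < iterLog n y := lt_of_lt_of_le hM0 hL
  have hQ1 : 1 ≤ ∏ i ∈ Finset.range (n-1), iterLog (i+1) y := by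
    calc (1:ℝ) = ∏ _i ∈ Finset.range (n-1), (1:ℝ) := by simp
      _ ≤ ∏ i ∈ Finset.range (n-1), iterLog (i+1) y := by
          apply Finset.prod_le_prod (fun i _ => zero_le_one)
          intro i hi
          exact le_trans (by linarith) (hFy (i+1) (by
            rcases Finset.mem_range.mp hi with h; omega))
  have hQ0 : 0 < ∏ i ∈ Finset.range (n-1), iterLog (i+1) y := lt_of_lt_of_le one_pos hQ1
  have hDL := hasDerivAt_iterLog n y hpos
  have h1 := hDL.rpow_const (p := 1 - 2*lam) (Or.inl hL0.ne')
  have h2 := hDL.rpow_const (p := -(2*lam)) (Or.inl hL0.ne')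
  obtain ⟨d, hd, hd0, hdb, hQlb⟩ := Qfun_hasDerivAt hM hFy (n-1) (by omega)
  have hinv := hd.inv hQ0.ne'
  have hprod := h2.mul hinv
  have hfull := (h1.const_sub 1).add (hprod.const_mul (2*lam - 1))
  rw [Dn_eq (show 1 ≤ n by omega)] at hfull h1 h2 hDL
  -- introduce opaque names
  obtain ⟨L, hLdef⟩ : ∃ L : ℝ, iterLog n y = L := ⟨_, rfl⟩
  obtain ⟨Q, hQdef⟩ : ∃ Q : ℝ, (∏ i ∈ Finset.range (n-1), iterLog (i+1) y) = Q := ⟨_, rfl⟩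
  rw [hQdef] at hQ1 hQ0 hdb hQlb hinv hprod hfull ⊢
  rw [hLdef] at hL hL0 h1 h2 hprod hfull ⊢
  obtain ⟨e, hedef⟩ : ∃ e : ℝ, L ^ (-(2*lam)) = e := ⟨_, rfl⟩
  have hc1 : L ^ (1 - 2*lam - 1) = e := by
    rw [← hedef, show (1 - 2*lam - 1 : ℝ) = -(2*lam) by ring]
  have hc2 : L ^ (-(2*lam) - 1) = e * L⁻¹ := by
    rw [← hedef, show (-(2*lam) - 1 : ℝ) = -(2*lam) + (-1) by ring, Real.rpow_add hL0,
      Real.rpow_neg_one]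
  rw [hedef] at hprod hfull ⊢
  rw [hc1] at hfull h1
  rw [hc2] at hfull hprod h2
  have he0 : 0 < e := hedef ▸ Real.rpow_pos_of_pos hL0 _
  clear hDL h1 h2 hprod hinv hd hpos
  set A : ℝ := (2*lam - 1) * e * (y*Q)⁻¹ with hAdef
  set t1 : ℝ := (2*lam - 1) * (2*lam) * (y*Q)⁻¹ * e * L⁻¹ * Q⁻¹ with ht1def
  set t2 : ℝ := (2*lam - 1) * e * (d / Q^2) with ht2def
  clear_value A t1 t2
  have hA0 : 0 < A := by
    rw [hAdef]
    have h3 : (0:ℝ) < (y*Q)⁻¹ := by positivity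
    exact mul_pos (mul_pos (by linarith) he0) h3
  have hLinv : L⁻¹ ≤ M⁻¹ := inv_anti₀ hM0 hL
  have hQinv : Q⁻¹ ≤ 1 := by
    rw [inv_le_one_iff₀]; right; exact hQ1
  have hs2 : 2*lam * M⁻¹ ≤ 1/4 := by
    rw [← div_eq_mul_inv, div_le_iff₀ hM0]
    nlinarith
  have hfrac : 2*lam * L⁻¹ * Q⁻¹ ≤ 1/4 := by
    have hs1 : 2*lam * L⁻¹ ≤ 2*lam * M⁻¹ :=
      mul_le_mul_of_nonneg_left hLinv (by linarith)
    have hs3 : 2*lam * L⁻¹ * Q⁻¹ ≤ 2*lam * L⁻¹ * 1 := by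
      apply mul_le_mul_of_nonneg_left hQinv
      have h4 : (0:ℝ) < L⁻¹ := by positivity
      nlinarith
    nlinarith
  have ht1a : 0 ≤ t1 := by
    rw [ht1def]
    have p1 : (0:ℝ) ≤ (y*Q)⁻¹ := by positivity
    have p2 : (0:ℝ) ≤ L⁻¹ := by positivity
    have p3 : (0:ℝ) ≤ Q⁻¹ := by positivity
    have p4 : (0:ℝ) ≤ (2*lam-1) * (2*lam) := mul_nonneg (by linarith) (by linarith)
    exact mul_nonneg (mul_nonneg (mul_nonneg (mul_nonneg p4 p1) he0.le) p2) p3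
  have ht1b : t1 ≤ A/4 := by
    have heq : t1 = A * (2*lam * L⁻¹ * Q⁻¹) := by rw [ht1def, hAdef]; ring
    rw [heq]
    calc A * (2*lam * L⁻¹ * Q⁻¹) ≤ A * (1/4) := mul_le_mul_of_nonneg_left hfrac hA0.le
      _ = A/4 := by ring
  have ht2a : 0 ≤ t2 := by
    rw [ht2def]
    exact mul_nonneg (mul_nonneg (by linarith) he0.le) (div_nonneg hd0 (by positivity))
  have hkey : 4*(y*d) ≤ Q := by
    obtain ⟨P, hP⟩ : ∃ P : ℝ, M^(n-1) = P := ⟨_, rfl⟩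
    have hMp : (0:ℝ) < P := hP ▸ by positivity
    rw [hP] at hdb
    have hstep : y*d*(M-1)*P ≤ Q*P :=
      le_trans hdb (mul_le_mul_of_nonneg_left (by linarith) hQ0.le)
    have hstep2 : y*d*(M-1) ≤ Q := le_of_mul_le_mul_right hstep hMp
    have hyd0 : 0 ≤ y*d := mul_nonneg hy0.le hd0
    nlinarith [mul_le_mul_of_nonneg_right (show (4:ℝ) ≤ M-1 by linarith) hyd0]
  have ht2b : t2 ≤ A/4 := by
    have h4 : d / Q^2 ≤ (y*Q)⁻¹/4 := by
      rw [inv_eq_one_div, div_div, div_le_div_iff₀ (by positivity) (by positivity)]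
      nlinarith [mul_le_mul_of_nonneg_right hkey hQ0.le]
    have h5 : t2 ≤ (2*lam-1)*e*((y*Q)⁻¹/4) := by
      rw [ht2def]
      exact mul_le_mul_of_nonneg_left h4 (mul_nonneg (by linarith) he0.le)
    have h6 : (2*lam-1)*e*((y*Q)⁻¹/4) = A/4 := by rw [hAdef]; ring
    linarith
  have hAe : (2*lam - 1) * e / (y*Q) = A := by rw [hAdef, div_eq_mul_inv]
  refine ⟨A - t1 - t2, ?_, ?_, ?_⟩
  · have heq : psiF n lam = fun z => 1 - iterLog n z ^ (1-2*lam)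
        + (2*lam-1) * (iterLog n z ^ (-(2*lam))
          * (∏ i ∈ Finset.range (n-1), iterLog (i+1) z)⁻¹) := rfl
    rw [heq]
    refine hfull.congr_deriv ?_
    symm
    simp only [Pi.inv_apply, hQdef]
    rw [hAdef, ht1def, ht2def]
    ring
  · rw [hAe]; linarith
  · rw [hAe]; linarith

set_option maxHeartbeats 1000000 in
/-- Derivative bounds (3.19)–(3.21) for the test function `φ`, for all
sufficiently large `k ≥ e^{(n)}` depending only on `(n, λ, γ)`. -/
theorem stmt_10 (n : ℕ) (hn : 2 ≤ n) (lam β γ T : ℝ) (hlam : 1 / 2 < lam)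
    (hβ : 0 ≤ β) (hγ : 0 < γ) (hT : 0 < T) :
    ∃ k₀ : ℝ, iterExp n ≤ k₀ ∧ ∀ k : ℝ, k₀ ≤ k →
      ∀ s ∈ Set.Icc (0 : ℝ) T, ∀ x : ℝ, 0 ≤ x →
        0 < phiAux n k β γ lam s x ∧
        0 < deriv (fun t : ℝ => phiAux n k β γ lam t x) s ∧
        0 < deriv (fun u : ℝ => phiAux n k β γ lam s u) x ∧
        0 < deriv (deriv (fun u : ℝ => phiAux n k β γ lam s u)) x ∧
        (muAux β γ lam s / 2 ≤ deriv (fun u : ℝ => phiAux n k β γ lam s u) x ∧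
          deriv (fun u : ℝ => phiAux n k β γ lam s u) x ≤ muAux β γ lam s) ∧
        ((2 * lam - 1) * muAux β γ lam s /
            (2 * (k + x) * (IL n k lam x) ^ 2) ≤
          deriv (deriv (fun u : ℝ => phiAux n k β γ lam s u)) x ∧
          deriv (deriv (fun u : ℝ => phiAux n k β γ lam s u)) x ≤
            (2 * lam - 1) * muAux β γ lam s / ((k + x) * (IL n k lam x) ^ 2)) ∧
        (1 / 2) * (k + x) * deriv (muAux β γ lam) s ≤
          deriv (fun t : ℝ => phiAux n k β γ lam t x) s := by
  obtain ⟨a, ha⟩ : ∃ a : ℝ, 2 * (β + 2 * γ ^ 2 / (2 * lam - 1)) = a := ⟨_, rfl⟩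
  have ha0 : 0 < a := by
    have h1 : 0 < 2 * γ ^ 2 / (2 * lam - 1) := div_pos (by positivity) (by linarith)
    linarith [ha ▸ (by linarith : (0:ℝ) < 2 * (β + 2 * γ ^ 2 / (2 * lam - 1)))]
  set M : ℝ := max (8*lam + 5) ((2:ℝ) ^ ((1:ℝ)/(2*lam - 1))) with hMdef
  have hM1 : 8*lam + 5 ≤ M := le_max_left _ _
  have hM2 : 2 ≤ M := by linarith
  have hM0 : 0 < M := by linarith
  have hMc : M ^ (1 - 2*lam) ≤ 1/2 := by
    have hb : (0:ℝ) < 2 ^ ((1:ℝ)/(2*lam - 1)) := Real.rpow_pos_of_pos two_pos _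
    have h1 : M ^ (1 - 2*lam) ≤ ((2:ℝ) ^ ((1:ℝ)/(2*lam - 1))) ^ (1 - 2*lam) :=
      Real.rpow_le_rpow_of_nonpos hb (le_max_right _ _) (by linarith)
    have h2 : ((2:ℝ) ^ ((1:ℝ)/(2*lam - 1))) ^ (1 - 2*lam)
        = (2:ℝ) ^ (((1:ℝ)/(2*lam - 1)) * (1 - 2*lam)) :=
      (Real.rpow_mul (by norm_num) _ _).symm
    have hne : (2*lam - 1) ≠ 0 := by intro h; linarith [hlam]
    have h3 : (1:ℝ)/(2*lam - 1) * (1 - 2*lam) = -1 := by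
      field_simp
      ring
    rw [h2, h3, Real.rpow_neg_one] at h1
    linarith [h1]
  clear_value M
  refine ⟨max (iterExp n) (Real.exp^[n] M + 1), le_max_left _ _, ?_⟩
  intro k hk s hs x hx
  have hkM : Real.exp^[n] M + 1 ≤ k := le_trans (le_max_right _ _) hk
  have hreg : ∀ u : ℝ, (-1:ℝ) ≤ u → ∀ i ≤ n, M ≤ iterLog i (k+u) := by
    intro u hu i hi
    have h1 : Real.exp^[n] M ≤ k + u := by linarith
    exact le_trans (le_iterate_exp _ hM0.le) (iterLog_lower i hi hM0.le h1)
  have hF : ∀ i ≤ n, M ≤ iterLog i (k+x) := hreg x (by linarith)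
  have hyM : M ≤ k + x := hF 0 (Nat.zero_le n)
  have hy0 : 0 < k + x := lt_of_lt_of_le hM0 hyM
  have hL : M ≤ iterLog n (k+x) := hF n le_rfl
  have hL0 : 0 < iterLog n (k+x) := lt_of_lt_of_le hM0 hL
  have hLc : iterLog n (k+x) ^ (1 - 2*lam) ≤ 1/2 :=
    le_trans (Real.rpow_le_rpow_of_nonpos hM0 hL (by linarith)) hMc
  have hLc0 : 0 < iterLog n (k+x) ^ (1 - 2*lam) := Real.rpow_pos_of_pos hL0 _
  have hμ0 : 0 < muAux β γ lam s := Real.exp_pos _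
  -- time derivative
  have h0 : HasDerivAt (fun t : ℝ => a*t) a s := by
    simpa using (hasDerivAt_id s).const_mul a
  have hds : HasDerivAt (fun t : ℝ => phiAux n k β γ lam t x)
      ((k+x)*(1 - iterLog n (k+x) ^ (1 - 2*lam)) * (Real.exp (a*s) * a)) s := by
    have h1 := (h0.exp).const_mul ((k+x)*(1 - iterLog n (k+x) ^ (1 - 2*lam)))
    unfold phiAux muAux
    rw [ha]
    exact h1
  have hmu : HasDerivAt (muAux β γ lam) (Real.exp (a*s) * a) s := by
    unfold muAux
    rw [ha]
    exact h0.exp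
  -- first space derivative
  have hD1 : ∀ u : ℝ, (-1:ℝ) < u → HasDerivAt (fun u' : ℝ => phiAux n k β γ lam s u')
      (psiF n lam (k+u) * muAux β γ lam s) u := by
    intro u hu
    have h := hasDerivAt_Phi (lam := lam) hn hM2 (hreg u hu.le)
    have hadd : HasDerivAt (fun u' : ℝ => k + u') 1 u := (hasDerivAt_id u).const_add k
    have hcomp := HasDerivAt.comp u h hadd
    have h2 := hcomp.mul_const (muAux β γ lam s)
    unfold phiAux
    simpa using h2
  have hder1 : deriv (fun u : ℝ => phiAux n k β γ lam s u) x
      = psiF n lam (k+x) * muAux β γ lam s := (hD1 x (by linarith)).deriv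
  obtain ⟨hψlo, hψhi⟩ := psiF_bounds hn hlam hM1 hMc hF
  -- second space derivative
  obtain ⟨p, hp, hplo, hphi⟩ := hasDerivAt_psiF hn hlam hM1 hF
  have hEv : deriv (fun u : ℝ => phiAux n k β γ lam s u)
      =ᶠ[nhds x] fun u => psiF n lam (k+u) * muAux β γ lam s := by
    filter_upwards [Ioi_mem_nhds (show (-1:ℝ) < x by linarith)] with u hu
    exact (hD1 u hu).deriv
  have hcomp2 : HasDerivAt (fun u : ℝ => psiF n lam (k+u) * muAux β γ lam s)
      (p * muAux β γ lam s) x := by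
    have hadd : HasDerivAt (fun u' : ℝ => k + u') 1 x := (hasDerivAt_id x).const_add k
    have := (HasDerivAt.comp x hp hadd).mul_const (muAux β γ lam s)
    simpa using this
  have hder2 : deriv (deriv (fun u : ℝ => phiAux n k β γ lam s u)) x
      = p * muAux β γ lam s := by
    rw [hEv.deriv_eq]
    exact hcomp2.deriv
  -- IL squared
  have hQ0x : 0 < ∏ i ∈ Finset.range (n-1), iterLog (i+1) (k+x) := by
    apply Finset.prod_pos
    intro i hi
    exact lt_of_lt_of_le hM0 (hF (i+1) (by
      rcases Finset.mem_range.mp hi with h; omega))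
  have hL2 : 0 < iterLog n (k+x) ^ (2*lam) := Real.rpow_pos_of_pos hL0 _
  have hIL2 : (IL n k lam x)^2
      = (∏ i ∈ Finset.range (n-1), iterLog (i+1) (k+x)) * iterLog n (k+x) ^ (2*lam) := by
    unfold IL
    rw [mul_pow, ← Finset.prod_pow]
    congr 1
    · exact Finset.prod_congr rfl (fun i hi => Real.sq_sqrt
        (le_of_lt (lt_of_lt_of_le hM0 (hF (i+1) (by
          rcases Finset.mem_range.mp hi with h; omega)))))
    · rw [sq, ← Real.rpow_add hL0, show lam + lam = 2*lam by ring]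
  have hLneg : iterLog n (k+x) ^ (-(2*lam)) = (iterLog n (k+x) ^ (2*lam))⁻¹ :=
    Real.rpow_neg hL0.le _
  have heq1 : (2*lam - 1) * muAux β γ lam s / (2*(k+x)*(IL n k lam x)^2)
      = ((2*lam - 1) * (iterLog n (k+x) ^ (-(2*lam))) /
          ((k+x) * ∏ i ∈ Finset.range (n-1), iterLog (i+1) (k+x)) / 2) * muAux β γ lam s := by
    rw [hIL2, hLneg]
    field_simp
  have heq2 : (2*lam - 1) * muAux β γ lam s / ((k+x)*(IL n k lam x)^2)
      = ((2*lam - 1) * (iterLog n (k+x) ^ (-(2*lam))) /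
          ((k+x) * ∏ i ∈ Finset.range (n-1), iterLog (i+1) (k+x))) * muAux β γ lam s := by
    rw [hIL2, hLneg]
    field_simp
  have hA0 : 0 < (2*lam - 1) * (iterLog n (k+x) ^ (-(2*lam))) /
      ((k+x) * ∏ i ∈ Finset.range (n-1), iterLog (i+1) (k+x)) :=
    div_pos (mul_pos (by linarith) (Real.rpow_pos_of_pos hL0 _)) (mul_pos hy0 hQ0x)
  have hp0 : 0 < p := lt_of_lt_of_le (by linarith) hplo
  refine ⟨?_, ?_, ?_, ?_, ⟨?_, ?_⟩, ⟨?_, ?_⟩, ?_⟩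
  · unfold phiAux
    exact mul_pos (mul_pos hy0 (by linarith)) hμ0
  · rw [hds.deriv]
    exact mul_pos (mul_pos hy0 (by linarith)) (mul_pos (Real.exp_pos _) ha0)
  · rw [hder1]
    exact mul_pos (by linarith) hμ0
  · rw [hder2]
    exact mul_pos hp0 hμ0
  · rw [hder1]
    nlinarith [mul_nonneg (by linarith : (0:ℝ) ≤ psiF n lam (k+x) - 1/2) hμ0.le]
  · rw [hder1]
    nlinarith [mul_nonneg (by linarith : (0:ℝ) ≤ 1 - psiF n lam (k+x)) hμ0.le]
  · rw [hder2, heq1]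
    exact mul_le_mul_of_nonneg_right hplo hμ0.le
  · rw [hder2, heq2]
    exact mul_le_mul_of_nonneg_right hphi hμ0.le
  · rw [hmu.deriv, hds.deriv]
    nlinarith [mul_nonneg (mul_nonneg hy0.le
      (by linarith : (0:ℝ) ≤ 1 - iterLog n (k+x) ^ (1 - 2*lam) - 1/2))
      (mul_pos (Real.exp_pos (a*s)) ha0).le]
end

section
/- If a $C^{1,2}$ function $\phi:[0,T]\times[0,\infty)\to(0,\infty)$ satisfies $\phi_s>0$, $\phi_x>0$, $\phi_{xx}>0$ and $-\beta\phi_x(s,x)x - \frac{\gamma^2\phi_x^2(s,x)}{\phi_{xx}(s,x)\big(\mathcal{IL}_{n,k}^\lambda(\gamma\phi_x(s,x)/\phi_{xx}(s,x))\big)^2} + \phi_s(s,x) \ge 0$ for all $(s,x)$, and if $k$ is such that $\frac{2xy}{\mathcal{IL}_{n,k}^\lambda(y)}\le \frac{2x^2}{(\mathcal{IL}_{n,k}^\lambda(x))^2}+y^2$ for all $x,y\ge0$, then for all $(s,x,z)\in[0,T]\times[0,\infty)\times\mathbb{R}^{1\times d}$: $-\beta\phi_x(s,x)x - \phi_x(s,x)\frac{\gamma|z|}{\mathcal{IL}_{n,k}^\lambda(|z|)}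 + \tfrac12\phi_{xx}(s,x)|z|^2 + \phi_s(s,x) \ge 0$. Key step: $-\phi_x\frac{\gamma|z|}{\mathcal{IL}_{n,k}^\lambda(|z|)}+\tfrac12\phi_{xx}|z|^2 \ge -\frac{\gamma^2\phi_x^2}{\phi_{xx}(\mathcal{IL}_{n,k}^\lambda(\gamma\phi_x/\phi_{xx}))^2}$. -/
open Real Finset

/-- If a `C^{1,2}` test function `φ > 0` has `φ_s, φ_x, φ_{xx} > 0` and satisfies
(3.18), and `k` satisfies the key inequality (3.12) with `p = 2`, then `φ`
satisfies (3.17); also the key step inequality holds. -/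
theorem stmt_12 (n : ℕ) (hn : 2 ≤ n) (d : ℕ) (lam β γ k T : ℝ)
    (hlam : 1 / 2 < lam) (hβ : 0 ≤ β) (hγ : 0 < γ) (hT : 0 < T)
    (hk : iterExp n ≤ k) (φ : ℝ → ℝ → ℝ)
    (hC1 : ∀ x : ℝ, ContDiff ℝ 1 (fun s : ℝ => φ s x))
    (hC2 : ∀ s : ℝ, ContDiff ℝ 2 (fun x : ℝ => φ s x))
    (hpos : ∀ s ∈ Set.Icc (0 : ℝ) T, ∀ x : ℝ, 0 ≤ x →
      0 < φ s x ∧ 0 < deriv (fun t : ℝ => φ t x) s ∧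
        0 < deriv (fun u : ℝ => φ s u) x ∧
        0 < deriv (deriv (fun u : ℝ => φ s u)) x)
    (h318 : ∀ s ∈ Set.Icc (0 : ℝ) T, ∀ x : ℝ, 0 ≤ x →
      0 ≤ -β * deriv (fun u : ℝ => φ s u) x * x -
          γ ^ 2 * (deriv (fun u : ℝ => φ s u) x) ^ 2 /
            (deriv (deriv (fun u : ℝ => φ s u)) x *
              (IL n k lam (γ * deriv (fun u : ℝ => φ s u) x /
                deriv (deriv (fun u : ℝ => φ s u)) x)) ^ 2) +
          deriv (fun t : ℝ => φ t x) s)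
    (hkey : ∀ x y : ℝ, 0 ≤ x → 0 ≤ y →
      2 * x * y / IL n k lam y ≤ 2 * x ^ 2 / (IL n k lam x) ^ 2 + y ^ 2) :
    (∀ s ∈ Set.Icc (0 : ℝ) T, ∀ x : ℝ, 0 ≤ x →
      ∀ z : EuclideanSpace ℝ (Fin d),
        0 ≤ -β * deriv (fun u : ℝ => φ s u) x * x -
            deriv (fun u : ℝ => φ s u) x * (γ * ‖z‖ / IL n k lam ‖z‖) +
            (1 / 2) * deriv (deriv (fun u : ℝ => φ s u)) x * ‖z‖ ^ 2 +
            deriv (fun t : ℝ => φ t x) s) ∧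
    (∀ s ∈ Set.Icc (0 : ℝ) T, ∀ x : ℝ, 0 ≤ x →
      ∀ z : EuclideanSpace ℝ (Fin d),
        -(γ ^ 2 * (deriv (fun u : ℝ => φ s u) x) ^ 2 /
            (deriv (deriv (fun u : ℝ => φ s u)) x *
              (IL n k lam (γ * deriv (fun u : ℝ => φ s u) x /
                deriv (deriv (fun u : ℝ => φ s u)) x)) ^ 2)) ≤
          -(deriv (fun u : ℝ => φ s u) x) * (γ * ‖z‖ / IL n k lam ‖z‖) +
            (1 / 2) * deriv (deriv (fun u : ℝ => φ s u)) x * ‖z‖ ^ 2) := by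
  have key : ∀ s ∈ Set.Icc (0 : ℝ) T, ∀ x : ℝ, 0 ≤ x →
      ∀ z : EuclideanSpace ℝ (Fin d),
        -(γ ^ 2 * (deriv (fun u : ℝ => φ s u) x) ^ 2 /
            (deriv (deriv (fun u : ℝ => φ s u)) x *
              (IL n k lam (γ * deriv (fun u : ℝ => φ s u) x /
                deriv (deriv (fun u : ℝ => φ s u)) x)) ^ 2)) ≤
          -(deriv (fun u : ℝ => φ s u) x) * (γ * ‖z‖ / IL n k lam ‖z‖) +
            (1 / 2) * deriv (deriv (fun u : ℝ => φ s u)) x * ‖z‖ ^ 2 := by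
    intro s hs x hx z
    obtain ⟨-, -, hapos, hbpos⟩ := hpos s hs x hx
    set a := deriv (fun u : ℝ => φ s u) x with ha
    set b := deriv (deriv (fun u : ℝ => φ s u)) x with hb
    have hb' : b ≠ 0 := ne_of_gt hbpos
    have hX : 0 ≤ γ * a / b := by positivity
    have h := hkey (γ * a / b) ‖z‖ hX (norm_nonneg z)
    have h2 := mul_le_mul_of_nonneg_right h hbpos.le
    set I1 := IL n k lam ‖z‖ with hI1
    set I2 := IL n k lam (γ * a / b) with hI2
    have E1 : 2 * (γ * a / b) * ‖z‖ / I1 * b = 2 * (a * (γ * ‖z‖ / I1)) := by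
      have hnum : 2 * (γ * a / b) * ‖z‖ * b = 2 * (a * (γ * ‖z‖)) := by
        field_simp
      rw [div_mul_eq_mul_div, hnum, ← mul_div_assoc a, mul_div_assoc]
    have E2 : (2 * (γ * a / b) ^ 2 / I2 ^ 2 + ‖z‖ ^ 2) * b =
        2 * (γ ^ 2 * a ^ 2 / (b * I2 ^ 2)) + b * ‖z‖ ^ 2 := by
      rw [add_mul, div_mul_eq_mul_div]
      have : 2 * (γ * a / b) ^ 2 * b = 2 * γ ^ 2 * a ^ 2 / b := by
        field_simp
      rw [this, div_div]
      ring_nf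
    rw [E1, E2] at h2
    nlinarith [h2]
  refine ⟨?_, key⟩
  intro s hs x hx z
  have h1 := h318 s hs x hx
  have h2 := key s hs x hx z
  linarith
end

section
/- For all real $x_1,x_2\ge 0$: $\Big|\frac{x_1}{\sqrt{\ln(e^8+x_1)}\,(\ln\ln(e^8+x_1))^{2/3}} - \frac{x_2}{\sqrt{\ln(e^8+x_2)}\,(\ln\ln(e^8+x_2))^{2/3}}\Big| \le \frac{|x_1-x_2|}{\sqrt{\ln(e^8+|x_1-x_2|)}\,(\ln\ln(e^8+|x_1-x_2|))^{2/3}}$. -/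
open Real

private noncomputable def Dfun (x : ℝ) : ℝ :=
  Real.sqrt (Real.log (Real.exp 8 + x)) *
    (Real.log (Real.log (Real.exp 8 + x))) ^ ((2 : ℝ) / 3)

private lemma hL {x : ℝ} (hx : 0 ≤ x) : 8 ≤ Real.log (Real.exp 8 + x) :=
  calc (8:ℝ) = Real.log (Real.exp 8) := (Real.log_exp 8).symm
  _ ≤ _ := Real.log_le_log (Real.exp_pos 8) (by linarith)

private lemma hM {x : ℝ} (hx : 0 ≤ x) : 2 ≤ Real.log (Real.log (Real.exp 8 + x)) := by
  have h8 : Real.exp 2 ≤ 8 := by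
    have h := Real.exp_one_lt_d9
    have : Real.exp 2 = Real.exp 1 ^ 2 := by rw [← Real.exp_nat_mul]; ring_nf
    nlinarith [Real.exp_pos 1]
  calc (2:ℝ) = Real.log (Real.exp 2) := (Real.log_exp 2).symm
  _ ≤ _ := Real.log_le_log (Real.exp_pos 2) (le_trans h8 (hL hx))

private lemma hD {x : ℝ} (hx : 0 ≤ x) : 0 < Dfun x := by
  have h1 : (0:ℝ) < Real.log (Real.exp 8 + x) := lt_of_lt_of_le (by norm_num) (hL hx)
  have h2 : (0:ℝ) < Real.log (Real.log (Real.exp 8 + x)) := lt_of_lt_of_le (by norm_num) (hM hx)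
  exact mul_pos (Real.sqrt_pos.2 h1) (Real.rpow_pos_of_pos h2 _)

private lemma hDmono {a b : ℝ} (ha : 0 ≤ a) (hab : a ≤ b) : Dfun a ≤ Dfun b := by
  have hb : (0:ℝ) ≤ b := ha.trans hab
  have hLa : (0:ℝ) < Real.log (Real.exp 8 + a) := lt_of_lt_of_le (by norm_num) (hL ha)
  have hLab : Real.log (Real.exp 8 + a) ≤ Real.log (Real.exp 8 + b) :=
    Real.log_le_log (by positivity) (by linarith)
  have hMa : (0:ℝ) ≤ Real.log (Real.log (Real.exp 8 + a)) := le_trans (by norm_num) (hM ha)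
  have hMab : Real.log (Real.log (Real.exp 8 + a)) ≤ Real.log (Real.log (Real.exp 8 + b)) :=
    Real.log_le_log hLa hLab
  exact mul_le_mul (Real.sqrt_le_sqrt hLab)
    (Real.rpow_le_rpow hMa hMab (by norm_num)) (Real.rpow_nonneg hMa _) (Real.sqrt_nonneg _)

/-- key: `a * Dfun b ≤ b * Dfun a` for `0 ≤ a ≤ b`. -/
private lemma hkey {a b : ℝ} (ha : 0 ≤ a) (hab : a ≤ b) : a * Dfun b ≤ b * Dfun a := by
  rcases eq_or_lt_of_le ha with h0 | ha
  · rw [← h0]; simp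
    exact mul_nonneg (by linarith) (hD le_rfl).le
  · have hb : (0:ℝ) < b := ha.trans_le hab
    set u := Real.log (b / a) with hu_def
    have hr1 : (1:ℝ) ≤ b / a := (one_le_div ha).2 hab
    have hu : 0 ≤ u := Real.log_nonneg hr1
    have hLa := hL ha.le
    have hMa := hM ha.le
    have hLa0 : (0:ℝ) < Real.log (Real.exp 8 + a) := by linarith
    have hMa0 : (0:ℝ) < Real.log (Real.log (Real.exp 8 + a)) := by linarith
    set La := Real.log (Real.exp 8 + a)
    set Ma := Real.log La
    -- Step 1 : log (e⁸ + b) ≤ La + u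
    have hba : b / a * a = b := div_mul_cancel₀ b ha.ne'
    have h1 : Real.log (Real.exp 8 + b) ≤ La + u := by
      have harg : Real.exp 8 + b ≤ (b / a) * (Real.exp 8 + a) := by
        have : (b / a) * (Real.exp 8 + a) = (b / a) * Real.exp 8 + b := by
          rw [mul_add, hba]
        nlinarith [Real.exp_pos (8:ℝ)]
      calc Real.log (Real.exp 8 + b) ≤ Real.log ((b / a) * (Real.exp 8 + a)) :=
            Real.log_le_log (by positivity) harg
        _ = u + La := Real.log_mul (by positivity) (by positivity)
        _ = La + u := by ring
    -- Step 2 : La + u ≤ La * exp (u/8)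
    have h2 : Real.log (Real.exp 8 + b) ≤ La * Real.exp (u / 8) := by
      have e1 : 1 + u / 8 ≤ Real.exp (u / 8) := by
        have := Real.add_one_le_exp (u / 8); linarith
      have : La + u ≤ La * (1 + u / 8) := by nlinarith
      nlinarith [Real.exp_pos (u/8)]
    -- sqrt bound
    have hsqrtexp : ∀ t : ℝ, Real.sqrt (Real.exp t) = Real.exp (t / 2) := by
      intro t
      rw [show Real.exp t = Real.exp (t/2) ^ 2 by rw [← Real.exp_nat_mul]; ring_nf,
        Real.sqrt_sq (Real.exp_pos _).le]
    have hS : Real.sqrt (Real.log (Real.exp 8 + b)) ≤ Real.sqrt La * Real.exp (u / 16) := by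
      calc Real.sqrt (Real.log (Real.exp 8 + b)) ≤ Real.sqrt (La * Real.exp (u / 8)) :=
            Real.sqrt_le_sqrt h2
        _ = Real.sqrt La * Real.sqrt (Real.exp (u / 8)) := Real.sqrt_mul hLa0.le _
        _ = Real.sqrt La * Real.exp (u / 16) := by rw [hsqrtexp, show u/8/2 = u/16 by ring]
    -- log log bound
    have h3 : Real.log (Real.log (Real.exp 8 + b)) ≤ Ma + u / 8 := by
      calc Real.log (Real.log (Real.exp 8 + b)) ≤ Real.log (La * Real.exp (u / 8)) :=
            Real.log_le_log (by linarith [hL (hb.le : (0:ℝ) ≤ b)]) h2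
        _ = Ma + u / 8 := by rw [Real.log_mul hLa0.ne' (Real.exp_pos _).ne', Real.log_exp]
    have h4 : Real.log (Real.log (Real.exp 8 + b)) ≤ Ma * Real.exp (u / 16) := by
      have e1 : 1 + u / 16 ≤ Real.exp (u / 16) := by
        have := Real.add_one_le_exp (u / 16); linarith
      have : Ma + u / 8 ≤ Ma * (1 + u / 16) := by nlinarith
      nlinarith [Real.exp_pos (u/16)]
    have hT : (Real.log (Real.log (Real.exp 8 + b))) ^ ((2:ℝ)/3) ≤
        Ma ^ ((2:ℝ)/3) * Real.exp (u / 24) := by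
      have hMb0 : (0:ℝ) ≤ Real.log (Real.log (Real.exp 8 + b)) := by
        linarith [hM (hb.le : (0:ℝ) ≤ b)]
      calc (Real.log (Real.log (Real.exp 8 + b))) ^ ((2:ℝ)/3)
          ≤ (Ma * Real.exp (u / 16)) ^ ((2:ℝ)/3) :=
            Real.rpow_le_rpow hMb0 h4 (by norm_num)
        _ = Ma ^ ((2:ℝ)/3) * (Real.exp (u / 16)) ^ ((2:ℝ)/3) :=
            Real.mul_rpow hMa0.le (Real.exp_pos _).le
        _ = Ma ^ ((2:ℝ)/3) * Real.exp (u / 24) := by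
            rw [← Real.exp_mul, show u/16*((2:ℝ)/3) = u/24 by ring]
    -- combine
    have hcomb : Dfun b ≤ Dfun a * Real.exp u := by
      have hexp : Real.exp (u / 16) * Real.exp (u / 24) ≤ Real.exp u := by
        rw [← Real.exp_add]
        exact Real.exp_le_exp.2 (by linarith)
      calc Dfun b ≤ (Real.sqrt La * Real.exp (u / 16)) * (Ma ^ ((2:ℝ)/3) * Real.exp (u / 24)) := by
            apply mul_le_mul hS hT (Real.rpow_nonneg (by linarith [hM (hb.le : (0:ℝ) ≤ b)]) _)
            positivity
        _ = (Real.sqrt La * Ma ^ ((2:ℝ)/3)) * (Real.exp (u / 16) * Real.exp (u / 24)) := by ring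
        _ ≤ Dfun a * Real.exp u := by
            apply mul_le_mul_of_nonneg_left hexp
            have := hD ha.le
            exact this.le
    have hexpu : Real.exp u = b / a := Real.exp_log (by positivity)
    calc a * Dfun b ≤ a * (Dfun a * (b / a)) := by
          rw [← hexpu]; exact mul_le_mul_of_nonneg_left hcomb ha.le
      _ = b * Dfun a := by field_simp

private lemma main_aux {x₁ x₂ : ℝ} (h₂ : 0 ≤ x₂) (hle : x₂ ≤ x₁) :
    |x₁ / Dfun x₁ - x₂ / Dfun x₂| ≤ (x₁ - x₂) / Dfun (x₁ - x₂) := by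
  have h₁ : (0:ℝ) ≤ x₁ := h₂.trans hle
  have hd : (0:ℝ) ≤ x₁ - x₂ := sub_nonneg.2 hle
  have hD1 := hD h₁
  have hD2 := hD h₂
  have hDd := hD hd
  have hmono : x₂ / Dfun x₂ ≤ x₁ / Dfun x₁ := by
    rw [div_le_div_iff₀ hD2 hD1]
    exact hkey h₂ hle
  have hsub : x₁ / Dfun x₁ ≤ (x₁ - x₂) / Dfun (x₁ - x₂) + x₂ / Dfun x₂ := by
    have e1 : x₁ / Dfun x₁ = (x₁ - x₂) / Dfun x₁ + x₂ / Dfun x₁ := by ring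
    rw [e1]
    gcongr
    · exact hDmono hd (by linarith)
    · exact hDmono h₂ hle
  rw [abs_of_nonneg (by linarith)]
  linarith


/-- The iterated-logarithmic modulus from Example 2.7:
`|G(x₁) - G(x₂)| ≤ G(|x₁ - x₂|)` for `x₁, x₂ ≥ 0`, where
`G(x) = x / (√(ln(e⁸+x)) (ln ln(e⁸+x))^{2/3})`. -/

theorem stmt_14 (x₁ x₂ : ℝ) (h₁ : 0 ≤ x₁) (h₂ : 0 ≤ x₂) :
    |x₁ / (Real.sqrt (Real.log (Real.exp 8 + x₁)) *
        (Real.log (Real.log (Real.exp 8 + x₁))) ^ ((2 : ℝ) / 3)) -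
      x₂ / (Real.sqrt (Real.log (Real.exp 8 + x₂)) *
        (Real.log (Real.log (Real.exp 8 + x₂))) ^ ((2 : ℝ) / 3))| ≤
      |x₁ - x₂| / (Real.sqrt (Real.log (Real.exp 8 + |x₁ - x₂|)) *
        (Real.log (Real.log (Real.exp 8 + |x₁ - x₂|))) ^ ((2 : ℝ) / 3)) := by
  rcases le_total x₂ x₁ with hle | hle
  · have := main_aux h₂ hle
    rw [abs_of_nonneg (sub_nonneg.2 hle)]
    simpa [Dfun] using this
  · have := main_aux h₁ hle
    rw [abs_sub_comm x₁ x₂, abs_of_nonneg (sub_nonneg.2 hle)]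
    simpa [Dfun, abs_sub_comm] using this
end

section
/- Let $\psi:[0,\infty)\to[1,\infty)$ be twice continuously differentiable with $\psi'>0$, $\psi''<0$, $x\psi'(x)/\psi(x)\le 1/4$ and $-x\psi''(x)/\psi'(x)\le 3/2$ for all $x\ge0$. Then for each fixed $x>0$, the function $\bar f(y) := y^2 - \frac{2xy}{\psi(y)} + \frac{px^2}{\psi^2(x)}$ is strictly convex on $[0,x]$; moreover $\bar f'(0)<0$ and $\bar f'(x)>0$, so $\bar f$ attains its minimum on $[0,x]$ at a unique interior point $y_0\in(0,x)$ with $\bar f'(y_0)=0$. -/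
open Real

/-- Step in the proof of Proposition 3.1: for fixed `x > 0`, the function
`f̄(y) = y² - 2xy/ψ(y) + p x²/ψ(x)²` is strictly convex on `[0,x]`, with
`f̄'(0) < 0` and `f̄'(x) > 0`, so it attains its minimum over `[0,x]` at a
unique interior critical point `y₀ ∈ (0,x)`. -/
theorem stmt_17 (p : ℝ) (hp : 1 < p) (ψ : ℝ → ℝ)
    (hC2 : ContDiff ℝ 2 ψ)
    (hψ1 : ∀ y : ℝ, 0 ≤ y → 1 ≤ ψ y)
    (hψ' : ∀ y : ℝ, 0 ≤ y → 0 < deriv ψ y)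
    (hψ'' : ∀ y : ℝ, 0 ≤ y → deriv (deriv ψ) y < 0)
    (hlog : ∀ y : ℝ, 0 ≤ y → y * deriv ψ y / ψ y ≤ 1 / 4)
    (hlog' : ∀ y : ℝ, 0 ≤ y → -(y * deriv (deriv ψ) y / deriv ψ y) ≤ 3 / 2)
    (x : ℝ) (hx : 0 < x) :
    StrictConvexOn ℝ (Set.Icc 0 x)
        (fun y : ℝ => y ^ 2 - 2 * x * y / ψ y + p * x ^ 2 / (ψ x) ^ 2) ∧
      deriv (fun y : ℝ => y ^ 2 - 2 * x * y / ψ y + p * x ^ 2 / (ψ x) ^ 2) 0 < 0 ∧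
      0 < deriv (fun y : ℝ => y ^ 2 - 2 * x * y / ψ y + p * x ^ 2 / (ψ x) ^ 2) x ∧
      ∃ y₀ : ℝ, (y₀ ∈ Set.Ioo 0 x ∧
          deriv (fun y : ℝ => y ^ 2 - 2 * x * y / ψ y + p * x ^ 2 / (ψ x) ^ 2) y₀ = 0 ∧
          IsMinOn (fun y : ℝ => y ^ 2 - 2 * x * y / ψ y + p * x ^ 2 / (ψ x) ^ 2)
            (Set.Icc 0 x) y₀) ∧
        ∀ y : ℝ, y ∈ Set.Ioo 0 x →
          deriv (fun y : ℝ => y ^ 2 - 2 * x * y / ψ y + p * x ^ 2 / (ψ x) ^ 2) y = 0 →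
          y = y₀ := by
  set F : ℝ → ℝ := fun y : ℝ => y ^ 2 - 2 * x * y / ψ y + p * x ^ 2 / (ψ x) ^ 2 with hF
  have hψpos : ∀ y : ℝ, 0 ≤ y → 0 < ψ y := fun y hy => lt_of_lt_of_le one_pos (hψ1 y hy)
  have hdψ : Differentiable ℝ ψ := hC2.differentiable (by norm_num)
  have hC1 : ContDiff ℝ 1 (deriv ψ) := by
    have h2 : ContDiff ℝ ((1:ℕ∞)+1) ψ := by norm_num; exact hC2
    exact (contDiff_succ_iff_deriv.mp h2).2.2
  have hdψ' : Differentiable ℝ (deriv ψ) := hC1.differentiable (by norm_num)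
  set g : ℝ → ℝ := fun z => 2 * z - (2 * x * ψ z - 2 * x * z * deriv ψ z) / ψ z ^ 2 with hg
  have hF' : ∀ z : ℝ, ψ z ≠ 0 → HasDerivAt F (g z) z := by
    intro z hz
    have h1 : HasDerivAt (fun y : ℝ => y ^ 2) (2 * z) z := by simpa using hasDerivAt_pow 2 z
    have h2 : HasDerivAt (fun y : ℝ => 2 * x * y) (2 * x) z := by
      simpa using (hasDerivAt_id z).const_mul (2 * x)
    have h3 : HasDerivAt (fun y : ℝ => 2 * x * y / ψ y)
        ((2 * x * ψ z - 2 * x * z * deriv ψ z) / ψ z ^ 2) z := h2.div (hdψ z).hasDerivAt hz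
    exact (h1.sub h3).add_const _
  have hderivF : ∀ z : ℝ, 0 ≤ z → deriv F z = g z := fun z hz =>
    (hF' z (ne_of_gt (hψpos z hz))).deriv
  have hgcont : ContinuousOn g (Set.Icc 0 x) := by
    rw [hg]
    apply ContinuousOn.sub
    · exact (continuous_const.mul continuous_id).continuousOn
    · apply ContinuousOn.div
      · exact ((continuous_const.mul hC2.continuous).sub
          ((continuous_const.mul continuous_id).mul hC1.continuous)).continuousOn
      · exact (hC2.continuous.pow 2).continuousOn
      · intro z hz; exact pow_ne_zero _ (ne_of_gt (hψpos z hz.1))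
  have hFcont : ContinuousOn F (Set.Icc 0 x) := by
    rw [hF]
    apply ContinuousOn.add
    · apply ContinuousOn.sub
      · exact (continuous_pow 2).continuousOn
      · exact ContinuousOn.div ((continuous_const.mul continuous_id).continuousOn)
          hC2.continuous.continuousOn (fun z hz => ne_of_gt (hψpos z hz.1))
    · exact continuousOn_const
  have hderivFcont : ContinuousOn (deriv F) (Set.Icc 0 x) :=
    hgcont.congr (fun z hz => hderivF z hz.1)
  have hD2 : ∀ y : ℝ, y ∈ Set.Ioo 0 x → 0 < deriv (deriv F) y := by
    intro y hy
    have hy0 : 0 ≤ y := le_of_lt hy.1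
    have ha : 0 < ψ y := hψpos y hy0
    have hb : 0 < deriv ψ y := hψ' y hy0
    have hc : deriv (deriv ψ) y < 0 := hψ'' y hy0
    have hEq : deriv F =ᶠ[nhds y] g := by
      filter_upwards [Ioi_mem_nhds hy.1] with z hz
      exact hderivF z (le_of_lt hz)
    have hN : HasDerivAt (fun z : ℝ => 2 * x * ψ z - 2 * x * z * deriv ψ z)
        (2 * x * deriv ψ y - (2 * x * deriv ψ y + 2 * x * y * deriv (deriv ψ) y)) y := by
      have hA : HasDerivAt (fun z : ℝ => 2 * x * ψ z) (2 * x * deriv ψ y) y :=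
        ((hdψ y).hasDerivAt).const_mul (2 * x)
      have hB0 : HasDerivAt (fun z : ℝ => 2 * x * z) (2 * x) y := by
        simpa using (hasDerivAt_id y).const_mul (2 * x)
      have hB : HasDerivAt (fun z : ℝ => 2 * x * z * deriv ψ z)
          (2 * x * deriv ψ y + 2 * x * y * deriv (deriv ψ) y) y := by
        exact hB0.mul ((hdψ' y).hasDerivAt)
      exact hA.sub hB
    have hDen : HasDerivAt (fun z : ℝ => ψ z ^ 2) (2 * ψ y * deriv ψ y) y := by
      have : HasDerivAt (fun z : ℝ => ψ z ^ 2) (((2:ℕ):ℝ) * ψ y ^ (2 - 1) * deriv ψ y) y :=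
        ((hdψ y).hasDerivAt).fun_pow 2
      convert this using 1
      ring
    have hQ : HasDerivAt (fun z : ℝ => (2 * x * ψ z - 2 * x * z * deriv ψ z) / ψ z ^ 2)
        (((2 * x * deriv ψ y - (2 * x * deriv ψ y + 2 * x * y * deriv (deriv ψ) y)) * ψ y ^ 2 -
          (2 * x * ψ y - 2 * x * y * deriv ψ y) * (2 * ψ y * deriv ψ y)) / (ψ y ^ 2) ^ 2) y :=
      hN.div hDen (by positivity)
    have hlin : HasDerivAt (fun z : ℝ => 2 * z) 2 y := by
      simpa using (hasDerivAt_id y).const_mul 2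
    have hgderiv : HasDerivAt g
        (2 - ((2 * x * deriv ψ y - (2 * x * deriv ψ y + 2 * x * y * deriv (deriv ψ) y)) * ψ y ^ 2 -
          (2 * x * ψ y - 2 * x * y * deriv ψ y) * (2 * ψ y * deriv ψ y)) / (ψ y ^ 2) ^ 2) y := by
      rw [hg]; exact hlin.sub hQ
    have hval : deriv (deriv F) y =
        2 - ((2 * x * deriv ψ y - (2 * x * deriv ψ y + 2 * x * y * deriv (deriv ψ) y)) * ψ y ^ 2 -
          (2 * x * ψ y - 2 * x * y * deriv ψ y) * (2 * ψ y * deriv ψ y)) / (ψ y ^ 2) ^ 2 := by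
      rw [hEq.deriv_eq]; exact hgderiv.deriv
    rw [hval]
    have h1 : y * deriv ψ y ≤ ψ y / 4 := by
      have h := hlog y hy0
      rw [div_le_iff₀ ha] at h
      linarith
    have h2 : -(3/2) * deriv ψ y ≤ y * deriv (deriv ψ) y := by
      have h := hlog' y hy0
      have h' : -(3/2 : ℝ) ≤ y * deriv (deriv ψ) y / deriv ψ y := neg_le.mp h
      exact (le_div_iff₀ hb).mp h'
    have key : 0 ≤ 2 * ψ y * deriv ψ y - 2 * y * (deriv ψ y)^2 + y * ψ y * deriv (deriv ψ) y := by
      nlinarith [mul_le_mul_of_nonneg_left h1 hb.le, mul_le_mul_of_nonneg_left h2 ha.le]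
    have hfrac : ((2 * x * deriv ψ y - (2 * x * deriv ψ y + 2 * x * y * deriv (deriv ψ) y)) * ψ y ^ 2 -
          (2 * x * ψ y - 2 * x * y * deriv ψ y) * (2 * ψ y * deriv ψ y)) / (ψ y ^ 2) ^ 2 ≤ 0 := by
      apply div_nonpos_of_nonpos_of_nonneg
      · nlinarith [mul_nonneg (mul_nonneg (mul_nonneg (by norm_num : (0:ℝ) ≤ 2) hx.le) ha.le) key]
      · positivity
    linarith
  have hconv : StrictConvexOn ℝ (Set.Icc 0 x) F := by
    apply strictConvexOn_of_deriv2_pos (convex_Icc 0 x) hFcont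
    intro y hy
    rw [interior_Icc] at hy
    have h2 : deriv^[2] F y = deriv (deriv F) y := by
      simp [Function.iterate_succ, Function.comp]
    rw [h2]
    exact hD2 y hy
  have hmono : StrictMonoOn (deriv F) (Set.Icc 0 x) := by
    apply strictMonoOn_of_deriv_pos (convex_Icc 0 x) hderivFcont
    intro y hy
    rw [interior_Icc] at hy
    exact hD2 y hy
  have hd0 : deriv F 0 < 0 := by
    rw [hderivF 0 le_rfl, hg]
    have ha := hψpos 0 le_rfl
    have hpos : (0:ℝ) < (2 * x * ψ 0 - 2 * x * 0 * deriv ψ 0) / ψ 0 ^ 2 := by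
      apply div_pos (by nlinarith) (by positivity)
    simp only
    linarith
  have hdx : 0 < deriv F x := by
    rw [hderivF x hx.le, hg]
    have ha := hψpos x hx.le
    have hb := hψ' x hx.le
    have h1 := hψ1 x hx.le
    simp only
    rw [sub_pos, div_lt_iff₀ (by positivity)]
    nlinarith [mul_nonneg (mul_nonneg hx.le ha.le) (sub_nonneg.mpr h1), mul_pos (mul_pos hx hx) hb]
  obtain ⟨y₀, hy₀mem, hy₀⟩ : ∃ y₀ ∈ Set.Ioo 0 x, deriv F y₀ = 0 := by
    obtain ⟨y₀, hmem, heq⟩ := intermediate_value_Ioo hx.le hderivFcont ⟨hd0, hdx⟩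
    exact ⟨y₀, hmem, heq⟩
  have hy₀Icc : y₀ ∈ Set.Icc 0 x := ⟨hy₀mem.1.le, hy₀mem.2.le⟩
  have hmin : IsMinOn F (Set.Icc 0 x) y₀ := by
    rw [isMinOn_iff]
    intro z hz
    rcases le_total z y₀ with hzy | hzy
    · have hanti : AntitoneOn F (Set.Icc 0 y₀) := by
        apply antitoneOn_of_deriv_nonpos (convex_Icc 0 y₀)
          (hFcont.mono (Set.Icc_subset_Icc le_rfl hy₀mem.2.le))
        · intro t ht
          rw [interior_Icc] at ht
          exact ((hF' t (ne_of_gt (hψpos t ht.1.le))).differentiableAt).differentiableWithinAt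
        · intro t ht
          rw [interior_Icc] at ht
          have hlt := hmono (Set.mem_Icc.mpr ⟨ht.1.le, (ht.2.trans_le hy₀mem.2.le).le⟩) hy₀Icc ht.2
          linarith [hy₀ ▸ hlt]
      exact hanti (Set.mem_Icc.mpr ⟨hz.1, hzy⟩) (Set.mem_Icc.mpr ⟨hy₀mem.1.le, le_rfl⟩) hzy
    · have hmonoF : MonotoneOn F (Set.Icc y₀ x) := by
        apply monotoneOn_of_deriv_nonneg (convex_Icc y₀ x)
          (hFcont.mono (Set.Icc_subset_Icc hy₀mem.1.le le_rfl))
        · intro t ht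
          rw [interior_Icc] at ht
          exact ((hF' t (ne_of_gt (hψpos t (hy₀mem.1.le.trans ht.1.le)))).differentiableAt).differentiableWithinAt
        · intro t ht
          rw [interior_Icc] at ht
          have hlt := hmono hy₀Icc (Set.mem_Icc.mpr ⟨(hy₀mem.1.trans ht.1).le, ht.2.le⟩) ht.1
          linarith [hy₀ ▸ hlt]
      exact hmonoF (Set.mem_Icc.mpr ⟨le_rfl, hy₀mem.2.le⟩) (Set.mem_Icc.mpr ⟨hzy, hz.2⟩) hzy
  refine ⟨hconv, hd0, hdx, y₀, ⟨hy₀mem, hy₀, hmin⟩, ?_⟩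
  intro y hy hyderiv
  exact hmono.injOn ⟨hy.1.le, hy.2.le⟩ hy₀Icc (by rw [hyderiv, hy₀])
end
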